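/- arXiv:2503.11541 — 6 statements merged into one kernel-verified Lean document; each statement's English description precedes it below -/
import Mathlib

section
/- Let z ≥ 2 and let h_1, …, h_z be finite sets such that for every k ∈ {1,…,z} there exists k′ ≠ k with h_k ∩ h_{k′} ≠ ∅. Then |h_1 ∪ ⋯ ∪ h_z| ≤ (Σ_{k=1}^z |h_k|) − ⌈z/2⌉. -/
/-- If `h 0, …, h (z-1)` (`z ≥ 2`) are finite sets such that each
one meets at least one other, then `|⋃ h k| ≤ (Σ |h k|) - ⌈z/2⌉`, stated
additively:  `|⋃ h k| + ⌈z/2⌉ ≤ Σ |h k|`. -/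
theorem stmt5 {α : Type*} [DecidableEq α] (z : ℕ) (hz : 2 ≤ z)
    (h : Fin z → Finset α)
    (hint : ∀ k, ∃ k', k' ≠ k ∧ (h k ∩ h k').Nonempty) :
    (Finset.univ.biUnion h).card + (z + 1) / 2 ≤ ∑ k, (h k).card := by
  classical
  set U := Finset.univ.biUnion h with hU
  choose g hg hne using hint
  choose f hf using hne
  have hf1 : ∀ k, f k ∈ h k := fun k => (Finset.mem_inter.1 (hf k)).1
  have hf2 : ∀ k, f k ∈ h (g k) := fun k => (Finset.mem_inter.1 (hf k)).2
  set m : α → ℕ := fun x => (Finset.univ.filter (fun k => x ∈ h k)).card with hm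
  set S := Finset.univ.image f with hS
  have hSU : S ⊆ U := by
    intro x hx
    simp only [hS, Finset.mem_image] at hx
    obtain ⟨k, -, rfl⟩ := hx
    exact Finset.mem_biUnion.2 ⟨k, Finset.mem_univ k, hf1 k⟩
  -- double counting
  have hsub : ∀ k, h k ⊆ U := fun k x hx =>
    Finset.mem_biUnion.2 ⟨k, Finset.mem_univ k, hx⟩
  have hsum : ∑ k, (h k).card = ∑ x ∈ U, m x := by
    have step : ∀ k, (h k).card = ∑ x ∈ U, (if x ∈ h k then 1 else 0) := by
      intro k
      rw [← Finset.card_filter]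
      congr 1
      ext x
      simp only [Finset.mem_filter]
      exact ⟨fun hx => ⟨hsub k hx, hx⟩, And.right⟩
    calc ∑ k, (h k).card = ∑ k, ∑ x ∈ U, (if x ∈ h k then 1 else 0) := by
          exact Finset.sum_congr rfl fun k _ => step k
      _ = ∑ x ∈ U, ∑ k, (if x ∈ h k then 1 else 0) := Finset.sum_comm
      _ = ∑ x ∈ U, m x := by
          exact Finset.sum_congr rfl fun x _ => (Finset.card_filter _ _).symm
  have hm1 : ∀ x ∈ U, 1 ≤ m x := by
    intro x hx
    obtain ⟨k, -, hk⟩ := Finset.mem_biUnion.1 hx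
    have : k ∈ Finset.univ.filter (fun k => x ∈ h k) := by
      simp [hk]
    exact Finset.card_pos.2 ⟨k, this⟩
  have hm2 : ∀ x ∈ S, 2 ≤ m x := by
    intro x hx
    obtain ⟨k, -, rfl⟩ := Finset.mem_image.1 hx
    have hsub2 : ({k, g k} : Finset (Fin z)) ⊆
        Finset.univ.filter (fun j => f k ∈ h j) := by
      intro j hj
      simp only [Finset.mem_insert, Finset.mem_singleton] at hj
      simp only [Finset.mem_filter, Finset.mem_univ, true_and]
      rcases hj with rfl | rfl
      exacts [hf1 _, hf2 _]
    calc 2 = ({k, g k} : Finset (Fin z)).card := (Finset.card_pair (hg k).symm).symm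
      _ ≤ m (f k) := Finset.card_le_card hsub2
  -- fiber counting
  have hc : z = ∑ x ∈ S, (Finset.univ.filter (fun k => f k = x)).card := by
    rw [hS, ← Finset.card_eq_sum_card_image f Finset.univ, Finset.card_univ,
      Fintype.card_fin]
  have hcm : ∀ x ∈ S, (Finset.univ.filter (fun k => f k = x)).card ≤ m x := by
    intro x hx
    apply Finset.card_le_card
    intro k hk
    simp only [Finset.mem_filter, Finset.mem_univ, true_and] at hk ⊢
    rw [← hk]; exact hf1 k
  set t := ∑ x ∈ S, (m x - 1) with ht
  have hD : z ≤ 2 * t := by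
    rw [hc, ht, Finset.mul_sum]
    refine Finset.sum_le_sum fun x hx => ?_
    have := hm2 x hx
    have := hcm x hx
    omega
  have hC : ∑ x ∈ S, m x = S.card + t := by
    rw [ht, Finset.card_eq_sum_ones, ← Finset.sum_add_distrib]
    refine Finset.sum_congr rfl fun x hx => ?_
    have := hm2 x hx
    omega
  have hB : (U \ S).card ≤ ∑ x ∈ U \ S, m x := by
    rw [Finset.card_eq_sum_ones]
    exact Finset.sum_le_sum fun x hx => hm1 x (Finset.mem_sdiff.1 hx).1
  have hA : ∑ x ∈ U \ S, m x + ∑ x ∈ S, m x = ∑ x ∈ U, m x :=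
    Finset.sum_sdiff hSU
  have hE : (U \ S).card + S.card = U.card := Finset.card_sdiff_add_card_eq_card hSU
  rw [hsum]
  omega
end

section
/- Let z ≥ 2 be an even integer and let h_1, …, h_z be nonempty finite sets such that for every k there exists k′ ≠ k with h_k ∩ h_{k′} ≠ ∅. Then |h_1 ∪ ⋯ ∪ h_z| = (Σ_{k=1}^z |h_k|) − z/2 holds if and only if there is a partition of {1,…,z} into z/2 unordered pairs such that |h_a ∩ h_b| = 1 whenever {a,b} is one of the pairs, and h_k ∩ h_{k′} = ∅ whenever k ≠ k′ do not form a pair. -/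
open Finset in
lemma stmt6_dc {α : Type*} [DecidableEq α] {z : ℕ} (h : Fin z → Finset α) (S : Finset α) :
    ∑ x ∈ S, (univ.filter fun k => x ∈ h k).card = ∑ k, (h k ∩ S).card := by
  simp only [card_filter]
  rw [Finset.sum_comm]
  refine Finset.sum_congr rfl fun k _ => ?_
  rw [← card_filter, filter_mem_eq_inter, inter_comm]

open Finset in
lemma stmt6_L1 {α : Type*} [DecidableEq α] {z : ℕ} (h : Fin z → Finset α) :
    (univ.biUnion h).card
      + ∑ x ∈ (univ.biUnion h).filter (fun x => 2 ≤ (univ.filter fun k => x ∈ h k).card),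
          (univ.filter fun k => x ∈ h k).card
    = ∑ k, (h k).card
      + ((univ.biUnion h).filter (fun x => 2 ≤ (univ.filter fun k => x ∈ h k).card)).card := by
  classical
  set U := univ.biUnion h with hU
  set m : α → ℕ := fun x => (univ.filter fun k => x ∈ h k).card with hm
  set S := U.filter (fun x => 2 ≤ m x) with hS
  have hsum : ∑ k, (h k).card = ∑ x ∈ U, m x := by
    rw [stmt6_dc h U]
    refine Finset.sum_congr rfl fun k _ => ?_
    congr 1
    exact (inter_eq_left.mpr (subset_biUnion_of_mem h (mem_univ k))).symm
  have hsub : S ⊆ U := filter_subset _ _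
  have hsplit : ∑ x ∈ U \ S, m x + ∑ x ∈ S, m x = ∑ x ∈ U, m x :=
    Finset.sum_sdiff hsub
  have hone : ∀ x ∈ U \ S, m x = 1 := by
    intro x hx
    rw [mem_sdiff] at hx
    obtain ⟨hxU, hxnS⟩ := hx
    have hx2 : ¬ 2 ≤ m x := fun hc => hxnS (mem_filter.mpr ⟨hxU, hc⟩)
    have h1 : 1 ≤ m x := by
      rw [hU, mem_biUnion] at hxU
      obtain ⟨k, _, hk⟩ := hxU
      exact card_pos.mpr ⟨k, mem_filter.mpr ⟨mem_univ k, hk⟩⟩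
    omega
  have hone' : ∑ x ∈ U \ S, m x = (U \ S).card := by
    rw [Finset.sum_congr rfl hone, Finset.sum_const, smul_eq_mul, mul_one]
  have hcards : (U \ S).card + S.card = U.card :=
    card_sdiff_add_card_eq_card hsub
  have heta : S.sum m = ∑ x ∈ S, m x := rfl
  omega

open Finset in
lemma stmt6_fwd {α : Type*} [DecidableEq α] (z : ℕ) (hz : 2 ≤ z) (hze : Even z)
    (h : Fin z → Finset α) (hne : ∀ k, (h k).Nonempty)
    (hint : ∀ k, ∃ k', k' ≠ k ∧ (h k ∩ h k').Nonempty)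
    (heq : (Finset.univ.biUnion h).card + z / 2 = ∑ k, (h k).card) :
    ∃ p : Fin z → Fin z, (∀ k, p k ≠ k) ∧ (∀ k, p (p k) = k) ∧
        (∀ k, (h k ∩ h (p k)).card = 1) ∧
        (∀ k k', k' ≠ k → k' ≠ p k → h k ∩ h k' = ∅) := by
  classical
  set U := univ.biUnion h with hU
  set m : α → ℕ := fun x => (univ.filter fun k => x ∈ h k).card with hm
  set S := U.filter (fun x => 2 ≤ m x) with hS
  have hzz : z / 2 * 2 = z := Nat.div_mul_cancel hze.two_dvd
  have hmemU : ∀ x (k : Fin z), x ∈ h k → x ∈ U := fun x k hx =>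
    mem_biUnion.mpr ⟨k, mem_univ k, hx⟩
  have hm2 : ∀ x (k k' : Fin z), k ≠ k' → x ∈ h k → x ∈ h k' → 2 ≤ m x := by
    intro x k k' hkk hxk hxk'
    have : ({k, k'} : Finset (Fin z)) ⊆ univ.filter fun j => x ∈ h j := by
      intro j hj
      rw [mem_insert, mem_singleton] at hj
      rcases hj with rfl | rfl <;> exact mem_filter.mpr ⟨mem_univ _, by assumption⟩
    calc 2 = ({k, k'} : Finset (Fin z)).card := (card_pair hkk).symm
    _ ≤ _ := card_le_card this
  have hL1 : U.card + ∑ x ∈ S, m x = ∑ k, (h k).card + S.card := stmt6_L1 h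
  have hdc : ∑ x ∈ S, m x = ∑ k, (h k ∩ S).card := stmt6_dc h S
  -- each h k meets S
  have hkS : ∀ k, 1 ≤ (h k ∩ S).card := by
    intro k
    obtain ⟨k', hk', hy⟩ := hint k
    obtain ⟨y, hy⟩ := hy
    rw [mem_inter] at hy
    have : y ∈ S := mem_filter.mpr ⟨hmemU y k hy.1, hm2 y k k' (Ne.symm hk') hy.1 hy.2⟩
    exact card_pos.mpr ⟨y, mem_inter.mpr ⟨hy.1, this⟩⟩
  have hAz : z ≤ ∑ x ∈ S, m x := by
    rw [hdc]
    calc z = ∑ _k : Fin z, 1 := by simp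
    _ ≤ _ := Finset.sum_le_sum fun k _ => hkS k
  have h2S : 2 * S.card ≤ ∑ x ∈ S, m x := by
    calc 2 * S.card = ∑ _x ∈ S, 2 := by rw [Finset.sum_const, smul_eq_mul, mul_comm]
    _ ≤ _ := Finset.sum_le_sum fun x hx => (mem_filter.mp hx).2
  have heta : S.sum m = ∑ x ∈ S, m x := rfl
  have hScard : S.card = z / 2 := by omega
  have hAeq : ∑ x ∈ S, m x = z := by omega
  -- each h k meets S in exactly one point
  have hfib1 : ∀ k, (h k ∩ S).card = 1 := by
    have : ∑ k, (h k ∩ S).card = ∑ _k : Fin z, 1 := by rw [← hdc, hAeq]; simp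
    intro k
    exact ((Finset.sum_eq_sum_iff_of_le fun i _ => hkS i).mp this.symm k (mem_univ k)).symm
  -- m = 2 on S
  have hmS : ∀ x ∈ S, m x = 2 := by
    have : ∑ x ∈ S, (2:ℕ) = ∑ x ∈ S, m x := by
      rw [hAeq, Finset.sum_const, smul_eq_mul, hScard]; omega
    intro x hx
    exact ((Finset.sum_eq_sum_iff_of_le fun y hy => (mem_filter.mp hy).2).mp this x hx).symm
  -- pick the unique shared element of each h k
  have hxk : ∀ k, ∃ a, h k ∩ S = {a} := fun k => card_eq_one.mp (hfib1 k)
  set xk : Fin z → α := fun k => (hxk k).choose with hxkdef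
  have hxkspec : ∀ k, h k ∩ S = {xk k} := fun k => (hxk k).choose_spec
  have hxkmem : ∀ k, xk k ∈ h k ∧ xk k ∈ S := by
    intro k
    have : xk k ∈ h k ∩ S := by rw [hxkspec k]; exact mem_singleton_self _
    exact mem_inter.mp this
  have key : ∀ (k : Fin z) y, y ∈ h k → 2 ≤ m y → y = xk k := by
    intro k y hy h2
    have : y ∈ h k ∩ S := mem_inter.mpr ⟨hy, mem_filter.mpr ⟨hmemU y k hy, h2⟩⟩
    rw [hxkspec k, mem_singleton] at this
    exact this
  have hmx2 : ∀ k, m (xk k) = 2 := fun k => hmS _ (hxkmem k).2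
  have hex : ∀ k, ∃ j, j ≠ k ∧ xk k ∈ h j := by
    intro k
    by_contra hcon
    push_neg at hcon
    have hsub : (univ.filter fun j => xk k ∈ h j) ⊆ {k} := by
      intro j hj
      rw [mem_singleton]
      by_contra hj'
      exact hcon j hj' (mem_filter.mp hj).2
    have h1 := card_le_card hsub
    rw [card_singleton] at h1
    have h2 : (univ.filter fun j => xk k ∈ h j).card = 2 := hmx2 k
    omega
  set p : Fin z → Fin z := fun k => (hex k).choose with hpdef
  have hp1 : ∀ k, p k ≠ k := fun k => (hex k).choose_spec.1
  have hp2 : ∀ k, xk k ∈ h (p k) := fun k => (hex k).choose_spec.2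
  have hFk : ∀ k, (univ.filter fun j => xk k ∈ h j) = {k, p k} := by
    intro k
    refine (Finset.eq_of_subset_of_card_le ?_ ?_).symm
    · intro j hj
      rw [mem_insert, mem_singleton] at hj
      rcases hj with rfl | rfl
      · exact mem_filter.mpr ⟨mem_univ _, (hxkmem j).1⟩
      · exact mem_filter.mpr ⟨mem_univ _, hp2 k⟩
    · rw [card_pair (hp1 k).symm]
      have h2 : (univ.filter fun j => xk k ∈ h j).card = 2 := hmx2 k
      omega
  have huniq : ∀ (k j : Fin z), j ≠ k → xk k ∈ h j → j = p k := by
    intro k j hjk hxj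
    have : j ∈ ({k, p k} : Finset (Fin z)) := by
      rw [← hFk k]; exact mem_filter.mpr ⟨mem_univ _, hxj⟩
    rw [mem_insert, mem_singleton] at this
    tauto
  have hxpk : ∀ k, xk (p k) = xk k :=
    fun k => (key (p k) (xk k) (hp2 k) (by rw [hmx2 k])).symm
  refine ⟨p, hp1, ?_, ?_, ?_⟩
  · intro k
    have h1 : p (p k) ≠ p k := hp1 _
    have h2 : xk (p k) ∈ h (p (p k)) := hp2 _
    rw [hxpk k] at h2
    have : p (p k) ∈ ({k, p k} : Finset (Fin z)) := by
      rw [← hFk k]; exact mem_filter.mpr ⟨mem_univ _, h2⟩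
    rw [mem_insert, mem_singleton] at this
    tauto
  · intro k
    have : h k ∩ h (p k) = {xk k} := by
      apply Finset.Subset.antisymm
      · intro y hy
        rw [mem_inter] at hy
        rw [mem_singleton]
        exact key k y hy.1 (hm2 y k (p k) (hp1 k).symm hy.1 hy.2)
      · intro y hy
        rw [mem_singleton] at hy
        subst hy
        exact mem_inter.mpr ⟨(hxkmem k).1, hp2 k⟩
    rw [this, card_singleton]
  · intro k k' hk'k hk'p
    rw [Finset.eq_empty_iff_forall_notMem]
    intro y hy
    rw [mem_inter] at hy
    have hym : 2 ≤ m y := hm2 y k k' (Ne.symm hk'k) hy.1 hy.2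
    have : y = xk k := key k y hy.1 hym
    subst this
    exact hk'p (huniq k k' hk'k hy.2)

open Finset in
lemma stmt6_bwd {α : Type*} [DecidableEq α] (z : ℕ) (hze : Even z)
    (h : Fin z → Finset α)
    (p : Fin z → Fin z) (hp1 : ∀ k, p k ≠ k) (hp2 : ∀ k, p (p k) = k)
    (hc1 : ∀ k, (h k ∩ h (p k)).card = 1)
    (hdisj : ∀ k k', k' ≠ k → k' ≠ p k → h k ∩ h k' = ∅) :
    (Finset.univ.biUnion h).card + z / 2 = ∑ k, (h k).card := by
  classical
  set U := univ.biUnion h with hU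
  set m : α → ℕ := fun x => (univ.filter fun k => x ∈ h k).card with hm
  set S := U.filter (fun x => 2 ≤ m x) with hS
  have hzz : z / 2 * 2 = z := Nat.div_mul_cancel hze.two_dvd
  have hL1 : U.card + ∑ x ∈ S, m x = ∑ k, (h k).card + S.card := stmt6_L1 h
  have hmemU : ∀ x (k : Fin z), x ∈ h k → x ∈ U := fun x k hx =>
    mem_biUnion.mpr ⟨k, mem_univ k, hx⟩
  -- m ≤ 2 everywhere on U
  have htop : ∀ x ∈ U, m x ≤ 2 := by
    intro x hx
    rw [hU, mem_biUnion] at hx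
    obtain ⟨k, -, hk⟩ := hx
    have hsub : (univ.filter fun j => x ∈ h j) ⊆ {k, p k} := by
      intro j hj
      rw [mem_filter] at hj
      rw [mem_insert, mem_singleton]
      by_contra hcon
      push_neg at hcon
      have := hdisj k j hcon.1 hcon.2
      have : x ∈ h k ∩ h j := mem_inter.mpr ⟨hk, hj.2⟩
      rw [hdisj k j hcon.1 hcon.2] at this
      exact notMem_empty x this
    calc m x ≤ ({k, p k} : Finset (Fin z)).card := card_le_card hsub
    _ ≤ 2 := card_insert_le _ _ |>.trans (by rw [card_singleton])
  -- the shared element of each pair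
  have hf : ∀ k, ∃ a, h k ∩ h (p k) = {a} := fun k => card_eq_one.mp (hc1 k)
  set f : Fin z → α := fun k => (hf k).choose with hfdef
  have hfspec : ∀ k, h k ∩ h (p k) = {f k} := fun k => (hf k).choose_spec
  have hfmem : ∀ k, f k ∈ h k ∧ f k ∈ h (p k) := by
    intro k
    have : f k ∈ h k ∩ h (p k) := by rw [hfspec k]; exact mem_singleton_self _
    exact mem_inter.mp this
  have hm2 : ∀ x (k k' : Fin z), k ≠ k' → x ∈ h k → x ∈ h k' → 2 ≤ m x := by
    intro x k k' hkk hxk hxk'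
    have : ({k, k'} : Finset (Fin z)) ⊆ univ.filter fun j => x ∈ h j := by
      intro j hj
      rw [mem_insert, mem_singleton] at hj
      rcases hj with rfl | rfl <;> exact mem_filter.mpr ⟨mem_univ _, by assumption⟩
    calc 2 = ({k, k'} : Finset (Fin z)).card := (card_pair hkk).symm
    _ ≤ _ := card_le_card this
  have hfS : ∀ k, f k ∈ S := fun k =>
    mem_filter.mpr ⟨hmemU _ k (hfmem k).1,
      hm2 _ k (p k) (hp1 k).symm (hfmem k).1 (hfmem k).2⟩
  -- S is the image of f
  have hSim : S = univ.image f := by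
    apply Finset.Subset.antisymm
    · intro x hx
      rw [hS, mem_filter] at hx
      obtain ⟨hxU, hx2⟩ := hx
      obtain ⟨k, hk, j, hj, hkj⟩ := Finset.one_lt_card.mp (by omega : 1 < m x)
      rw [mem_filter] at hk hj
      have hjpk : j = p k := by
        by_contra hcon
        have : x ∈ h k ∩ h j := mem_inter.mpr ⟨hk.2, hj.2⟩
        rw [hdisj k j (Ne.symm hkj) hcon] at this
        exact notMem_empty x this
      have : x ∈ h k ∩ h (p k) := mem_inter.mpr ⟨hk.2, hjpk ▸ hj.2⟩
      rw [hfspec k, mem_singleton] at this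
      exact mem_image.mpr ⟨k, mem_univ k, this.symm⟩
    · intro x hx
      obtain ⟨k, -, rfl⟩ := mem_image.mp hx
      exact hfS k
  -- f (p k) = f k
  have hfpk : ∀ k, f (p k) = f k := by
    intro k
    have h1 : f k ∈ h (p k) ∩ h (p (p k)) := by
      rw [hp2 k]
      exact mem_inter.mpr ⟨(hfmem k).2, (hfmem k).1⟩
    rw [hfspec (p k), mem_singleton] at h1
    exact h1.symm
  -- fibers of f
  have hfib : ∀ k j, f j = f k ↔ (j = k ∨ j = p k) := by
    intro k j
    constructor
    · intro hjk
      by_contra hcon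
      push_neg at hcon
      have : f k ∈ h k ∩ h j := mem_inter.mpr ⟨(hfmem k).1, hjk ▸ (hfmem j).1⟩
      rw [hdisj k j hcon.1 hcon.2] at this
      exact notMem_empty _ this
    · rintro (rfl | rfl)
      · rfl
      · exact hfpk k
  -- card S = z / 2
  have hScard : 2 * S.card = z := by
    have hcnt := Finset.card_eq_sum_card_image f (univ : Finset (Fin z))
    rw [card_univ, Fintype.card_fin] at hcnt
    have hfib2 : ∀ y ∈ univ.image f, (univ.filter fun j => f j = y).card = 2 := by
      intro y hy
      obtain ⟨k, -, rfl⟩ := mem_image.mp hy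
      have : (univ.filter fun j => f j = f k) = {k, p k} := by
        ext j
        simp only [mem_filter, mem_univ, true_and, mem_insert, mem_singleton]
        exact hfib k j
      rw [this, card_pair (hp1 k).symm]
    rw [Finset.sum_congr rfl hfib2, Finset.sum_const, smul_eq_mul, mul_comm] at hcnt
    rw [hSim, ← hcnt]
  -- m = 2 on S
  have hmS : ∀ x ∈ S, m x = 2 := by
    intro x hx
    have h2 := (mem_filter.mp hx).2
    have h3 := htop x (mem_filter.mp hx).1
    omega
  have hsum2 : ∑ x ∈ S, m x = 2 * S.card := by
    rw [Finset.sum_congr rfl hmS, Finset.sum_const, smul_eq_mul, mul_comm]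
  have heta : S.sum m = ∑ x ∈ S, m x := rfl
  omega

/-- For an even `z ≥ 2` and nonempty finite sets `h 0, …, h (z-1)`
each of which meets at least one other, `|⋃ h k| = (Σ |h k|) - z/2` (stated
additively) iff there is a fixed-point-free involution `p` of the index set
(a partition into `z/2` pairs) such that matched pairs overlap in exactly one
element and unmatched pairs are disjoint. -/
theorem stmt6 {α : Type*} [DecidableEq α] (z : ℕ) (hz : 2 ≤ z) (hze : Even z)
    (h : Fin z → Finset α) (hne : ∀ k, (h k).Nonempty)
    (hint : ∀ k, ∃ k', k' ≠ k ∧ (h k ∩ h k').Nonempty) :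
    (Finset.univ.biUnion h).card + z / 2 = ∑ k, (h k).card ↔
      ∃ p : Fin z → Fin z, (∀ k, p k ≠ k) ∧ (∀ k, p (p k) = k) ∧
        (∀ k, (h k ∩ h (p k)).card = 1) ∧
        (∀ k k', k' ≠ k → k' ≠ p k → h k ∩ h k' = ∅) := by
  exact ⟨fun heq => stmt6_fwd z hz hze h hne hint heq,
    fun ⟨p, hp1, hp2, hc1, hdisj⟩ => stmt6_bwd z hze h p hp1 hp2 hc1 hdisj⟩
end

section
/- Let z ≥ 1 and v ≥ 1 be integers. There exists a constant K, depending only on z and v, such that for every n ∈ ℕ the number of ordered z-tuples (A_1, …, A_z) of v-element subsets of {1,…,n} with the property that every A_k intersects at least one other A_{k′} (k′ ≠ k) is at most K · n^{zv − ⌈z/2⌉}. -/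
open Function Finset

section aux
variable {z : ℕ}

/-- A point is a "root" for `f` if it is periodic and minimal on its orbit. -/
def IsRootPt (f : Fin z → Fin z) (k : Fin z) : Prop :=
  (∃ m, 0 < m ∧ f^[m] k = k) ∧ ∀ t, k ≤ f^[t] k

lemma iter_mod {α : Type*} (f : α → α) {y : α} {m : ℕ} (hm : 0 < m)
    (hy : f^[m] y = y) : ∀ s, f^[s] y = f^[s % m] y := by
  intro s
  induction s using Nat.strong_induction_on with
  | _ s ih =>
    rcases lt_or_ge s m with h | h
    · rw [Nat.mod_eq_of_lt h]
    · have h1 : s = (s - m) + m := by omega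
      have h2 : f^[s] y = f^[s - m] y := by
        conv_lhs => rw [h1]
        rw [Function.iterate_add_apply, hy]
      rw [h2, ih (s - m) (by omega)]
      congr 1
      conv_rhs => rw [h1]
      rw [Nat.add_mod_right]

lemma exists_reach (f : Fin z → Fin z) (k : Fin z) : ∃ t, IsRootPt f (f^[t] k) := by
  obtain ⟨a, b, hab, h⟩ := Finite.exists_ne_map_eq_of_infinite (fun t : ℕ => f^[t] k)
  wlog hlt : a < b generalizing a b
  · exact this b a hab.symm h.symm (by omega)
  set y := f^[a] k with hy
  have hper : f^[b - a] y = y := by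
    rw [hy, ← Function.iterate_add_apply]
    rw [show b - a + a = b by omega]
    exact h.symm
  set m := b - a with hm
  have hm0 : 0 < m := by omega
  have hne : ((Finset.range m).image fun j => f^[j] y).Nonempty := by
    refine ⟨f^[0] y, Finset.mem_image.mpr ⟨0, Finset.mem_range.mpr hm0, rfl⟩⟩
  obtain ⟨j0, -, hj0⟩ := Finset.mem_image.mp (Finset.min'_mem _ hne)
  refine ⟨j0 + a, ?_⟩
  rw [Function.iterate_add_apply, ← hy]
  constructor
  · refine ⟨m, hm0, ?_⟩
    rw [← Function.iterate_add_apply, add_comm m j0, Function.iterate_add_apply, hper]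
  · intro t
    have h1 : f^[t] (f^[j0] y) = f^[(t + j0) % m] y := by
      rw [← Function.iterate_add_apply, iter_mod f hm0 hper]
    rw [h1, hj0]
    exact Finset.min'_le _ _ (Finset.mem_image.mpr
      ⟨(t + j0) % m, Finset.mem_range.mpr (Nat.mod_lt _ hm0), rfl⟩)

lemma root_reach {f : Fin z → Fin z} {k : Fin z} (hk : IsRootPt f k) (a : ℕ) :
    ∃ s, f^[s] (f^[a] k) = k := by
  obtain ⟨⟨m, hm, hmk⟩, -⟩ := hk
  have hge : a ≤ m * (a + 1) := by
    have : a + 1 ≤ m * (a + 1) := Nat.le_mul_of_pos_left _ hm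
    omega
  refine ⟨m * (a + 1) - a, ?_⟩
  rw [← Function.iterate_add_apply, show m * (a+1) - a + a = m * (a+1) by omega,
    Function.iterate_mul]
  exact Function.iterate_fixed hmk _

lemma root_eq {f : Fin z → Fin z} {k k' : Fin z} (hk : IsRootPt f k) (hk' : IsRootPt f k')
    {a b : ℕ} (h : f^[a] k = f^[b] k') : k = k' := by
  obtain ⟨s, hs⟩ := root_reach hk a
  obtain ⟨s', hs'⟩ := root_reach hk' b
  have h1 : k' ≤ k := by
    have h2 := hk'.2 (s + b)
    rwa [Function.iterate_add_apply, ← h, hs] at h2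
  have h2 : k ≤ k' := by
    have h3 := hk.2 (s' + a)
    rwa [Function.iterate_add_apply, h, hs'] at h3
  exact le_antisymm h2 h1

lemma card_roots (f : Fin z → Fin z) (hf : ∀ k, f k ≠ k)
    [DecidablePred (IsRootPt f)] :
    2 * (univ.filter (fun k => IsRootPt f k)).card ≤ z := by
  classical
  set R := univ.filter (fun k => IsRootPt f k) with hR
  have hdisj : ∀ k ∈ R, ∀ k' ∈ R, k ≠ k' →
      Disjoint ({k, f k} : Finset (Fin z)) {k', f k'} := by
    intro k hk k' hk' hne
    have hk1 : IsRootPt f k := (Finset.mem_filter.mp hk).2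
    have hk2 : IsRootPt f k' := (Finset.mem_filter.mp hk').2
    rw [Finset.disjoint_left]
    intro u hu hu'
    have e1 : u = f^[0] k ∨ u = f^[1] k := by
      rcases Finset.mem_insert.mp hu with h | h
      · exact Or.inl (by simpa using h)
      · exact Or.inr (by simpa using Finset.mem_singleton.mp h)
    have e2 : u = f^[0] k' ∨ u = f^[1] k' := by
      rcases Finset.mem_insert.mp hu' with h | h
      · exact Or.inl (by simpa using h)
      · exact Or.inr (by simpa using Finset.mem_singleton.mp h)
    rcases e1 with h1 | h1 <;> rcases e2 with h2 | h2 <;>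
      exact hne (root_eq hk1 hk2 (h1.symm.trans h2))
  have hcard : ∀ k ∈ R, ({k, f k} : Finset (Fin z)).card = 2 :=
    fun k _ => Finset.card_pair (Ne.symm (hf k))
  calc 2 * R.card = ∑ k ∈ R, ({k, f k} : Finset (Fin z)).card := by
        rw [Finset.sum_congr rfl hcard, Finset.sum_const, smul_eq_mul, mul_comm]
    _ = (R.biUnion fun k => ({k, f k} : Finset (Fin z))).card :=
        (Finset.card_biUnion hdisj).symm
    _ ≤ z := le_trans (Finset.card_le_univ _) (by simp)

open Classical in
noncomputable def dd (f : Fin z → Fin z) (k : Fin z) : ℕ := Nat.find (exists_reach f k)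

open Classical in
lemma dd_spec (f : Fin z → Fin z) (k : Fin z) : IsRootPt f (f^[dd f k] k) :=
  Nat.find_spec (exists_reach f k)

open Classical in
lemma dd_lt (f : Fin z → Fin z) {k : Fin z} (h : ¬ IsRootPt f k) :
    dd f (f k) < dd f k := by
  have h0 : dd f k ≠ 0 := by
    intro h0
    have h1 := dd_spec f k
    rw [h0] at h1
    simp only [Function.iterate_zero, id_eq] at h1
    exact h h1
  have hs : IsRootPt f (f^[dd f k - 1] (f k)) := by
    have h1 := dd_spec f k
    rwa [show dd f k = (dd f k - 1) + 1 by omega, Function.iterate_succ_apply] at h1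
  have h2 : dd f (f k) ≤ dd f k - 1 := Nat.find_le hs
  omega

end aux

lemma card_finset_card_eq (n m : ℕ) :
    Fintype.card {s : Finset (Fin n) // s.card = m} = n.choose m := by
  rw [Fintype.card_subtype]
  rw [show (univ.filter fun s : Finset (Fin n) => s.card = m) = powersetCard m univ by
    ext s; simp [Finset.mem_powersetCard_univ]]
  rw [Finset.card_powersetCard, Finset.card_univ, Fintype.card_fin]

lemma choose_le_two_pow' (n m : ℕ) : n.choose m ≤ 2 ^ n := by
  rcases le_or_gt m n with h | h
  · calc n.choose m ≤ ∑ i ∈ Finset.range (n+1), n.choose i :=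
        Finset.single_le_sum (fun i _ => Nat.zero_le _) (Finset.mem_range.mpr (by omega))
    _ = 2 ^ n := Nat.sum_range_choose n
  · rw [Nat.choose_eq_zero_of_lt h]; exact Nat.zero_le _

lemma iso_congr {n v : ℕ} {s s' : Finset (Fin n)} (h : s = s') {j j' : Fin v}
    (hj : j = j') (hs : s.card = v) (hs' : s'.card = v) :
    (s.orderIsoOfFin hs j : Fin n) = s'.orderIsoOfFin hs' j' := by
  subst h; subst hj; rfl

/-- There is a constant `K = K(z, v)` such that for every `n` the
number of ordered `z`-tuples of `v`-element subsets of `{1,…,n}`, each of which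
meets at least one other, is at most `K * n ^ (z*v - ⌈z/2⌉)`. -/
theorem stmt7 (z v : ℕ) (hz : 1 ≤ z) (hv : 1 ≤ v) :
    ∃ K : ℕ, ∀ n : ℕ,
      Nat.card {A : Fin z → Finset (Fin n) //
          (∀ k, (A k).card = v) ∧
          ∀ k, ∃ k', k' ≠ k ∧ (A k ∩ A k').Nonempty}
        ≤ K * n ^ (z * v - (z + 1) / 2) := by
  classical
  refine ⟨z ^ z * v ^ z * 2 ^ z, fun n => ?_⟩
  set e := z * v - (z + 1) / 2 with he
  set X := {A : Fin z → Finset (Fin n) //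
      (∀ k, (A k).card = v) ∧
      ∀ k, ∃ k', k' ≠ k ∧ (A k ∩ A k').Nonempty} with hX
  -- pick witnesses
  have hF0 : ∀ (x : X) (k : Fin z), ∃ k', k' ≠ k ∧ (x.1 k ∩ x.1 k').Nonempty :=
    fun x k => x.2.2 k
  choose F hFne hFint using hF0
  have hP0 : ∀ (x : X) (k : Fin z), ∃ a, a ∈ x.1 k ∧ a ∈ x.1 (F x k) := by
    intro x k
    obtain ⟨a, ha⟩ := hFint x k
    exact ⟨a, Finset.mem_inter.mp ha⟩
  choose P hP1 hP2 using hP0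
  -- padded root sets
  have hR0 : ∀ x : X, ∃ R : Finset (Fin z),
      (univ.filter fun k => IsRootPt (F x) k) ⊆ R ∧ R.card = z / 2 := by
    intro x
    have h1 : 2 * ((univ.filter fun k => IsRootPt (F x) k)).card ≤ z :=
      card_roots (F x) (fun k => hFne x k)
    obtain ⟨u, hu1, _, hu3⟩ := Finset.exists_subsuperset_card_eq
      (Finset.subset_univ (univ.filter fun k => IsRootPt (F x) k))
      (show ((univ.filter fun k => IsRootPt (F x) k)).card ≤ z / 2 by omega)
      (by simpa using Nat.div_le_self z 2)
    exact ⟨u, hu1, hu3⟩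
  choose R hRsub hRcard using hR0
  -- recorded sets
  have hB0 : ∀ (x : X) (k : Fin z), ∃ s : Finset (Fin n),
      s.card = (if k ∈ R x then v else v - 1) ∧
      (k ∈ R x → s = x.1 k) ∧ (k ∉ R x → x.1 k = insert (P x k) s) := by
    intro x k
    by_cases h : k ∈ R x
    · exact ⟨x.1 k, by simp [h, x.2.1 k], fun _ => rfl, fun h' => absurd h h'⟩
    · refine ⟨(x.1 k).erase (P x k), ?_, fun h' => absurd h' h, fun _ =>
        (Finset.insert_erase (hP1 x k)).symm⟩
      simp [h, Finset.card_erase_of_mem (hP1 x k), x.2.1 k]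
  choose B hB1 hB2 hB3 using hB0
  -- index of shared point in the parent set
  have hI0 : ∀ (x : X) (k : Fin z), ∃ j : Fin v,
      ((x.1 (F x k)).orderIsoOfFin (x.2.1 (F x k)) j : Fin n) = P x k := by
    intro x k
    exact ⟨((x.1 (F x k)).orderIsoOfFin (x.2.1 (F x k))).symm ⟨P x k, hP2 x k⟩, by simp⟩
  choose I hI using hI0
  -- the injection
  set Y := ((Fin z → Fin z) × (Fin z → Fin v) ×
      (Σ R : {R : Finset (Fin z) // R.card = z / 2},
        (k : Fin z) → {s : Finset (Fin n) // s.card = if k ∈ R.1 then v else v - 1}))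
    with hY
  have hinj : Nat.card X ≤ Nat.card Y := by
    refine Nat.card_le_card_of_injective
      (fun x => (⟨F x, I x, ⟨⟨R x, hRcard x⟩, fun k => ⟨B x k, hB1 x k⟩⟩⟩ : Y)) ?_
    intro x x' h
    have hFe : F x = F x' := congrArg (fun y : Y => y.1) h
    have hIe : I x = I x' := congrArg (fun y : Y => y.2.1) h
    have hRe : R x = R x' := congrArg (fun y : Y => y.2.2.1.1) h
    have hBe : ∀ k, B x k = B x' k := fun k =>
      congrArg (fun y : Y => (y.2.2.2 k).1) h
    have key : ∀ m, ∀ k, dd (F x) k < m → x.1 k = x'.1 k := by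
      intro m
      induction m with
      | zero => intro k hk; omega
      | succ m ih =>
        intro k hk
        by_cases hkR : k ∈ R x
        · rw [← hB2 x k hkR, hBe, hB2 x' k (hRe ▸ hkR)]
        · have hroot : ¬ IsRootPt (F x) k := by
            intro hcon
            exact hkR (hRsub x (Finset.mem_filter.mpr ⟨Finset.mem_univ k, hcon⟩))
          have hdd : dd (F x) (F x k) < m := by
            have := dd_lt (F x) hroot
            omega
          have hA : x.1 (F x k) = x'.1 (F x k) := ih (F x k) hdd
          have hkR' : k ∉ R x' := hRe ▸ hkR
          have hPP : P x k = P x' k := by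
            rw [← hI x k, ← hI x' k]
            exact iso_congr (by rw [← hFe, hA]) (by rw [hIe]) _ _
          rw [hB3 x k hkR, hB3 x' k hkR', hPP, hBe]
    exact Subtype.ext (funext fun k => key (dd (F x) k + 1) k (by omega))
  refine hinj.trans ?_
  -- cardinality of the target
  rw [hY, Nat.card_eq_fintype_card, Fintype.card_prod, Fintype.card_prod,
    Fintype.card_sigma]
  have hfun1 : Fintype.card (Fin z → Fin z) = z ^ z := by simp
  have hfun2 : Fintype.card (Fin z → Fin v) = v ^ z := by simp
  rw [hfun1, hfun2]
  have hsum : ∑ R : {R : Finset (Fin z) // R.card = z / 2},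
      Fintype.card ((k : Fin z) →
        {s : Finset (Fin n) // s.card = if k ∈ R.1 then v else v - 1})
      ≤ 2 ^ z * n ^ e := by
    have hterm : ∀ R : {R : Finset (Fin z) // R.card = z / 2},
        Fintype.card ((k : Fin z) →
          {s : Finset (Fin n) // s.card = if k ∈ R.1 then v else v - 1}) ≤ n ^ e := by
      intro R
      rw [Fintype.card_pi]
      have h1 : ∀ k : Fin z,
          Fintype.card {s : Finset (Fin n) // s.card = if k ∈ R.1 then v else v - 1}
          ≤ n ^ (if k ∈ R.1 then v else v - 1) := by
        intro k
        rw [card_finset_card_eq]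
        exact Nat.choose_le_pow n _
      calc ∏ k : Fin z,
            Fintype.card {s : Finset (Fin n) // s.card = if k ∈ R.1 then v else v - 1}
          ≤ ∏ k : Fin z, n ^ (if k ∈ R.1 then v else v - 1) :=
            Finset.prod_le_prod' (fun k _ => h1 k)
        _ = n ^ (∑ k : Fin z, if k ∈ R.1 then v else v - 1) :=
            Finset.prod_pow_eq_pow_sum _ _ _
        _ = n ^ e := by
            congr 1
            have h2 : ∀ k : Fin z, (if k ∈ R.1 then v else v - 1)
                = (v - 1) + (if k ∈ R.1 then 1 else 0) := by
              intro k; split <;> omega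
            rw [Finset.sum_congr rfl fun k _ => h2 k, Finset.sum_add_distrib,
              Finset.sum_const, Finset.card_univ, Fintype.card_fin, smul_eq_mul]
            have h3 : (∑ k : Fin z, if k ∈ R.1 then 1 else 0) = R.1.card := by
              have h3' : (Finset.univ.filter fun k : Fin z => k ∈ R.1) = R.1 := by
                ext a; simp
              rw [Finset.sum_boole, h3']
              simp
            rw [h3, R.2]
            obtain ⟨v', rfl⟩ : ∃ v', v = v' + 1 := ⟨v - 1, by omega⟩
            have h4 : z * (v' + 1) = z * v' + z := by ring
            simp only [he, Nat.add_sub_cancel]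
            omega
    calc ∑ R : {R : Finset (Fin z) // R.card = z / 2},
          Fintype.card ((k : Fin z) →
            {s : Finset (Fin n) // s.card = if k ∈ R.1 then v else v - 1})
        ≤ Fintype.card {R : Finset (Fin z) // R.card = z / 2} * n ^ e := by
          rw [← smul_eq_mul, ← Finset.card_univ]
          exact Finset.sum_le_card_nsmul _ _ _ (fun R _ => hterm R)
      _ ≤ 2 ^ z * n ^ e := by
          have h5 : Fintype.card {R : Finset (Fin z) // R.card = z / 2}
              = z.choose (z / 2) := card_finset_card_eq z (z / 2)
          exact Nat.mul_le_mul_right _ (h5 ▸ choose_le_two_pow' z (z / 2))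
  calc z ^ z * (v ^ z * ∑ R : {R : Finset (Fin z) // R.card = z / 2},
        Fintype.card ((k : Fin z) →
          {s : Finset (Fin n) // s.card = if k ∈ R.1 then v else v - 1}))
      ≤ z ^ z * (v ^ z * (2 ^ z * n ^ e)) :=
        Nat.mul_le_mul_left _ (Nat.mul_le_mul_left _ hsum)
    _ = z ^ z * v ^ z * 2 ^ z * n ^ e := by ring
end

section
/- Let v₁, v₂ ≥ 1 and c ∈ ℝ. For each n ∈ ℕ let (X_A)_{A ∈ 𝒫_{v₁}(n)} and (Y_B)_{B ∈ 𝒫_{v₂}(n)} be random variables on a common probability space taking values in [0,1] such that (i) X_A and Y_B are independent whenever A ∩ B = ∅, and (ii) Cov(X_A, Y_B) = c whenever |A ∩ B| = 1. Then |Cov(Σ_{A ∈ 𝒫_{v₁}(n)} X_A, Σ_{B ∈ 𝒫_{v₂}(n)} Y_B) − c·N₁(n)| ≤ min(v₁,v₂) · (v₁+v₂−2)! · n^{v₁+v₂−2}, where N₁(n) is the number of pairs (A,B) ∈ 𝒫_{v₁}(n) × 𝒫_{v₂}(n) with |A ∩ B| = 1. In particular, n^{−(v₁+v₂−1)} Cov(Σ_A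 X_A, Σ_B Y_B) → c / ((v₁−1)!(v₂−1)!) as n → ∞. -/
open MeasureTheory Filter

/-- The sum of a family of random variables over all `v`-element subsets of `Fin n`. -/
noncomputable def subsetSum {n : ℕ} {Ω : Type*} (v : ℕ)
    (X : Finset (Fin n) → Ω → ℝ) (ω : Ω) : ℝ :=
  ∑ A ∈ Finset.univ.filter (fun A : Finset (Fin n) => A.card = v), X A ω

/-- Covariance of two real random variables, `Cov(f, g) = E[fg] - E[f]E[g]`. -/
noncomputable def covInt {Ω : Type*} [MeasurableSpace Ω] (μ : Measure Ω)
    (f g : Ω → ℝ) : ℝ :=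
  (∫ ω, f ω * g ω ∂μ) - (∫ ω, f ω ∂μ) * (∫ ω, g ω ∂μ)

/-- The number of pairs `(A, B)` of subsets of `{1,…,n}` with `|A| = v₁`,
`|B| = v₂` and `|A ∩ B| = 1`. -/
def numOnePt (v₁ v₂ n : ℕ) : ℕ :=
  (Finset.univ.filter (fun p : Finset (Fin n) × Finset (Fin n) =>
    p.1.card = v₁ ∧ p.2.card = v₂ ∧ (p.1 ∩ p.2).card = 1)).card

/-! Expanding both sums, `Cov(Σ X_A, Σ Y_B) = Σ_{A,B} Cov(X_A, Y_B)`. Pairs with `A ∩ B = ∅`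
contribute `0` by independence, pairs with `|A ∩ B| = 1` contribute exactly `c`, and every other
pair contributes at most `1` in absolute value. A pair with `|A ∩ B| = k` is determined by
`(A ∩ B, A \ B, B \ A)`, so there are at most `n ^ (v₁ + v₂ - k)` of them, and summing over
`2 ≤ k ≤ min v₁ v₂` bounds the error by `O(n ^ (v₁ + v₂ - 2))`. The main term
`N₁(n) = C(n, v₁) · v₁ · C(n - v₁, v₂ - 1)` is asymptotic to
`n ^ (v₁ + v₂ - 1) / ((v₁ - 1)! (v₂ - 1)!)`. -/

open ProbabilityTheory Asymptotics Topology

section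

open Finset

section Covariance

variable {Ω : Type*} [MeasurableSpace Ω] {μ : Measure Ω} {f g : Ω → ℝ}

lemma covInt_eq_covariance [IsProbabilityMeasure μ] (hf : MemLp f 2 μ) (hg : MemLp g 2 μ) :
    covInt μ f g = cov[f, g; μ] :=
  (covariance_eq_sub hf hg).symm

lemma ProbabilityTheory.IndepFun.covInt_eq_zero (h : f ⟂ᵢ[μ] g) (hf : AEStronglyMeasurable f μ)
    (hg : AEStronglyMeasurable g μ) : covInt μ f g = 0 := by
  rw [covInt, h.integral_fun_mul_eq_mul_integral hf hg, sub_self]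

lemma integral_mem_Icc_zero_one [IsProbabilityMeasure μ] (hf : ∀ ω, f ω ∈ Set.Icc (0 : ℝ) 1) :
    ∫ ω, f ω ∂μ ∈ Set.Icc (0 : ℝ) 1 :=
  ⟨integral_nonneg fun ω => (hf ω).1,
    (integral_mono_of_nonneg (ae_of_all _ fun ω => (hf ω).1) (integrable_const 1)
      (ae_of_all _ fun ω => (hf ω).2)).trans (by simp)⟩

lemma abs_covInt_le_one [IsProbabilityMeasure μ] (hf : ∀ ω, f ω ∈ Set.Icc (0 : ℝ) 1)
    (hg : ∀ ω, g ω ∈ Set.Icc (0 : ℝ) 1) : |covInt μ f g| ≤ 1 := by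
  obtain ⟨hfg₀, hfg₁⟩ :=
    integral_mem_Icc_zero_one (μ := μ) fun ω => unitInterval.mul_mem (hf ω) (hg ω)
  obtain ⟨hf₀, hf₁⟩ := integral_mem_Icc_zero_one (μ := μ) hf
  obtain ⟨hg₀, hg₁⟩ := integral_mem_Icc_zero_one (μ := μ) hg
  rw [covInt, abs_le]
  constructor <;> nlinarith

lemma memLp_of_mem_Icc [IsFiniteMeasure μ] (hm : AEStronglyMeasurable f μ)
    (hf : ∀ ω, f ω ∈ Set.Icc (0 : ℝ) 1) (p : ENNReal) : MemLp f p μ :=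
  MemLp.of_bound hm 1 <| ae_of_all _ fun ω => by
    rw [Real.norm_eq_abs, abs_le]
    exact ⟨by linarith [(hf ω).1], (hf ω).2⟩

lemma covInt_fun_sum_fun_sum [IsProbabilityMeasure μ] {ι κ : Type*} {s : Finset ι}
    {t : Finset κ} {X : ι → Ω → ℝ} {Y : κ → Ω → ℝ} (hX : ∀ i ∈ s, MemLp (X i) 2 μ)
    (hY : ∀ j ∈ t, MemLp (Y j) 2 μ) :
    covInt μ (fun ω => ∑ i ∈ s, X i ω) (fun ω => ∑ j ∈ t, Y j ω)
      = ∑ i ∈ s, ∑ j ∈ t, covInt μ (X i) (Y j) := by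
  rw [covInt_eq_covariance (memLp_finsetSum s hX) (memLp_finsetSum t hY),
    covariance_fun_sum_fun_sum' hX hY]
  exact sum_congr rfl fun i hi => sum_congr rfl fun j hj =>
    (covInt_eq_covariance (hX i hi) (hY j hj)).symm

end Covariance

section Counting

variable (α : Type*) [Fintype α] [DecidableEq α]

def pairsInter (v₁ v₂ k : ℕ) : Finset (Finset α × Finset α) :=
  {p ∈ powersetCard v₁ univ ×ˢ powersetCard v₂ univ | #(p.1 ∩ p.2) = k}

variable {α}

lemma card_pairsInter_le {v₁ v₂ k : ℕ} (h₁ : k ≤ v₁) (h₂ : k ≤ v₂) :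
    #(pairsInter α v₁ v₂ k) ≤ Fintype.card α ^ (v₁ + v₂ - k) := by
  set n := Fintype.card α
  calc #(pairsInter α v₁ v₂ k)
      ≤ #(powersetCard k univ ×ˢ powersetCard (v₁ - k) univ ×ˢ
          powersetCard (v₂ - k) (univ : Finset α)) := by
        refine card_le_card_of_injOn (fun p => (p.1 ∩ p.2, p.1 \ p.2, p.2 \ p.1)) ?_ ?_
        · rintro ⟨A, B⟩ hp
          simp only [pairsInter, mem_coe, mem_filter, mem_product, mem_powersetCard_univ] at hp
          have hA := card_sdiff_add_card_inter A B
          have hB := card_sdiff_add_card_inter B A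
          rw [inter_comm B A] at hB
          simp only [mem_coe, mem_product, mem_powersetCard_univ]
          omega
        · rintro ⟨A, B⟩ - ⟨A', B'⟩ - h
          simp only [Prod.mk.injEq] at h ⊢
          obtain ⟨hi, hA, hB⟩ := h
          constructor
          · rw [← sdiff_union_inter A B, ← sdiff_union_inter A' B', hi, hA]
          · rw [← sdiff_union_inter B A, ← sdiff_union_inter B' A', inter_comm B,
              inter_comm B', hi, hB]
    _ = n.choose k * (n.choose (v₁ - k) * n.choose (v₂ - k)) := by
        simp only [card_product, card_powersetCard, card_univ, n]
    _ ≤ n ^ k * (n ^ (v₁ - k) * n ^ (v₂ - k)) := by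
        gcongr <;> exact Nat.choose_le_pow _ _
    _ = n ^ (v₁ + v₂ - k) := by
        rw [← pow_add, ← pow_add]
        congr 1
        omega

lemma card_filter_card_inter_eq_one (A : Finset α) {v : ℕ} (hv : 1 ≤ v) :
    #{B ∈ powersetCard v univ | #(A ∩ B) = 1}
      = #A * (Fintype.card α - #A).choose (v - 1) := by
  calc #{B ∈ powersetCard v univ | #(A ∩ B) = 1}
      = #(powersetCard 1 A ×ˢ powersetCard (v - 1) Aᶜ) := by
        refine card_nbij' (fun B => (A ∩ B, B \ A)) (fun p => p.1 ∪ p.2) ?_ ?_ ?_ ?_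
        · intro B hB
          simp only [mem_coe, mem_filter, mem_powersetCard_univ] at hB
          have := card_sdiff_add_card_inter B A
          rw [inter_comm B A] at this
          simp only [mem_coe, mem_product, mem_powersetCard]
          refine ⟨⟨inter_subset_left, hB.2⟩, fun x hx => ?_, by omega⟩
          simpa using (mem_sdiff.mp hx).2
        · rintro ⟨C, D⟩ hp
          simp only [mem_coe, mem_product, mem_powersetCard] at hp
          obtain ⟨⟨hCA, hC⟩, hDA, hD⟩ := hp
          have hdisj : Disjoint C D :=
            disjoint_of_subset_left hCA (subset_compl_iff_disjoint_left.mp hDA)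
          have hinter : A ∩ (C ∪ D) = C := by grind [mem_compl]
          simp only [mem_coe, mem_filter, mem_powersetCard_univ]
          rw [card_union_of_disjoint hdisj, hinter]
          omega
        · intro B _
          grind
        · rintro ⟨C, D⟩ hp
          simp only [mem_coe, mem_product, mem_powersetCard] at hp
          refine Prod.ext ?_ ?_ <;> grind [mem_compl]
    _ = #A * (Fintype.card α - #A).choose (v - 1) := by
        rw [card_product, card_powersetCard, card_powersetCard, Nat.choose_one_right,
          card_compl]

lemma card_pairsInter_one (v₁ : ℕ) {v₂ : ℕ} (hv₂ : 1 ≤ v₂) :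
    #(pairsInter α v₁ v₂ 1)
      = (Fintype.card α).choose v₁ * (v₁ * (Fintype.card α - v₁).choose (v₂ - 1)) := by
  rw [pairsInter, card_filter, sum_product]
  simp_rw [← card_filter]
  rw [sum_congr rfl fun A hA => by
      rw [card_filter_card_inter_eq_one A hv₂, (mem_powersetCard_univ.mp hA)],
    sum_const, card_powersetCard, card_univ, smul_eq_mul]

lemma card_filter_two_le_card_inter_le (v₁ v₂ : ℕ) :
    #{p ∈ powersetCard v₁ univ ×ˢ powersetCard v₂ (univ : Finset α) | 2 ≤ #(p.1 ∩ p.2)}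
      ≤ (min v₁ v₂ - 1) * Fintype.card α ^ (v₁ + v₂ - 2) := by
  set S := powersetCard v₁ (univ : Finset α) ×ˢ powersetCard v₂ (univ : Finset α)
  have hmaps : ∀ p ∈ {p ∈ S | 2 ≤ #(p.1 ∩ p.2)}, #(p.1 ∩ p.2) ∈ Icc 2 (min v₁ v₂) := by
    intro p hp
    simp only [S, mem_filter, mem_product, mem_powersetCard_univ] at hp
    obtain ⟨⟨h₁, h₂⟩, h⟩ := hp
    exact mem_Icc.mpr ⟨h, le_min (h₁ ▸ card_le_card inter_subset_left)
      (h₂ ▸ card_le_card inter_subset_right)⟩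
  calc #{p ∈ S | 2 ≤ #(p.1 ∩ p.2)}
      = ∑ k ∈ Icc 2 (min v₁ v₂), #(pairsInter α v₁ v₂ k) := by
        rw [card_eq_sum_card_fiberwise hmaps]
        refine sum_congr rfl fun k hk => ?_
        rw [filter_filter, pairsInter]
        congr 1
        ext p
        have := (mem_Icc.mp hk).1
        grind
    _ ≤ ∑ k ∈ Icc 2 (min v₁ v₂), Fintype.card α ^ (v₁ + v₂ - 2) := by
        refine sum_le_sum fun k hk => ?_
        obtain ⟨hk₂, hk⟩ := mem_Icc.mp hk
        refine (card_pairsInter_le (hk.trans (min_le_left _ _))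
          (hk.trans (min_le_right _ _))).trans ?_
        rcases (Fintype.card α).eq_zero_or_pos with hn | hn
        · simp [hn, show v₁ + v₂ - k ≠ 0 by omega]
        · exact Nat.pow_le_pow_right hn (by omega)
    _ = (min v₁ v₂ - 1) * Fintype.card α ^ (v₁ + v₂ - 2) := by
        rw [sum_const, Nat.card_Icc, smul_eq_mul]
        rfl

lemma numOnePt_eq_card_pairsInter (v₁ v₂ n : ℕ) :
    numOnePt v₁ v₂ n = #(pairsInter (Fin n) v₁ v₂ 1) := by
  rw [numOnePt, pairsInter]
  congr 1
  ext p
  simp [and_assoc]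

end Counting

section Asymptotics

lemma isEquivalent_natCast_sub (a : ℕ) :
    (fun n : ℕ => ((n - a : ℕ) : ℝ)) ~[atTop] (fun n => (n : ℝ)) := by
  have hconst : (fun _ : ℕ => -(a : ℝ)) =o[atTop] (fun n : ℕ => (n : ℝ)) :=
    isLittleO_const_left.mpr <| Or.inr <| tendsto_norm_atTop_atTop.comp tendsto_natCast_atTop_atTop
  refine hconst.congr' ?_ EventuallyEq.rfl
  filter_upwards [eventually_ge_atTop a] with n hn
  simp [Nat.cast_sub hn]

lemma isEquivalent_choose_sub (a k : ℕ) :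
    (fun n : ℕ => ((n - a).choose k : ℝ)) ~[atTop] (fun n => (n : ℝ) ^ k / k.factorial) :=
  ((isEquivalent_choose k).comp_tendsto (tendsto_sub_atTop_nat a)).trans
    (((isEquivalent_natCast_sub a).pow k).div IsEquivalent.refl)

lemma tendsto_numOnePt_div_pow {v₁ v₂ : ℕ} (hv₁ : 1 ≤ v₁) (hv₂ : 1 ≤ v₂) :
    Tendsto (fun n => (numOnePt v₁ v₂ n : ℝ) / n ^ (v₁ + v₂ - 1)) atTop
      (𝓝 (1 / ((v₁ - 1).factorial * (v₂ - 1).factorial))) := by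
  have hN : ∀ n, (numOnePt v₁ v₂ n : ℝ) = n.choose v₁ * (v₁ * (n - v₁).choose (v₂ - 1)) := by
    intro n
    rw [numOnePt_eq_card_pairsInter, card_pairsInter_one _ hv₂, Fintype.card_fin]
    push_cast
    ring
  have hequiv : (fun n => (numOnePt v₁ v₂ n : ℝ) / n ^ (v₁ + v₂ - 1)) ~[atTop]
      (fun n => (n : ℝ) ^ v₁ / v₁.factorial * (v₁ * ((n : ℝ) ^ (v₂ - 1) / (v₂ - 1).factorial))
        / n ^ (v₁ + v₂ - 1)) := by
    simp_rw [hN]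
    exact ((isEquivalent_choose v₁).mul
      ((IsEquivalent.refl (u := fun _ => (v₁ : ℝ))).mul (isEquivalent_choose_sub v₁ (v₂ - 1)))).div
      IsEquivalent.refl
  refine hequiv.symm.tendsto_nhds (tendsto_const_nhds.congr' ?_)
  filter_upwards [eventually_ne_atTop 0] with n hn
  rw [← Nat.mul_factorial_pred (by omega : v₁ ≠ 0), show v₁ + v₂ - 1 = v₁ + (v₂ - 1) by omega,
    pow_add]
  push_cast
  field_simp

lemma tendsto_div_pow_succ_of_abs_sub_le {a N : ℕ → ℝ} {c K L : ℝ} {e : ℕ}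
    (hbound : ∀ n, |a n - c * N n| ≤ K * n ^ e)
    (hN : Tendsto (fun n => N n / n ^ (e + 1)) atTop (𝓝 L)) :
    Tendsto (fun n => a n / n ^ (e + 1)) atTop (𝓝 (c * L)) := by
  have herr : Tendsto (fun n => (a n - c * N n) / n ^ (e + 1)) atTop (𝓝 0) := by
    refine squeeze_zero_norm' ?_ (tendsto_const_div_atTop_nhds_zero_nat K)
    filter_upwards [eventually_gt_atTop 0] with n hn
    have hn' : (0 : ℝ) < n := by exact_mod_cast hn
    rw [norm_div, norm_pow, Real.norm_natCast, div_le_iff₀ (by positivity), pow_succ',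
      ← mul_assoc, div_mul_cancel₀ _ hn'.ne', Real.norm_eq_abs]
    exact hbound n
  have hsum := herr.add (hN.const_mul c)
  rw [zero_add] at hsum
  exact hsum.congr fun n => by ring

end Asymptotics

lemma abs_sum_sub_mul_card_filter_le {ι : Type*} {s : Finset ι} {f : ι → ℝ} {c : ℝ}
    (p q : ι → Prop) [DecidablePred p] [DecidablePred q]
    (hp : ∀ i ∈ s, p i → f i = c) (hq : ∀ i ∈ s, q i → |f i| ≤ 1)
    (hzero : ∀ i ∈ s, ¬p i → ¬q i → f i = 0) :
    |∑ i ∈ s, f i - c * #{i ∈ s | p i}| ≤ #{i ∈ s | q i} := by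
  have h_on : ∑ i ∈ s with p i, f i = c * #{i ∈ s | p i} := by
    rw [sum_congr rfl fun i hi => hp i (mem_filter.mp hi).1 (mem_filter.mp hi).2, sum_const,
      nsmul_eq_mul, mul_comm]
  have h_off : ∑ i ∈ s with ¬p i, f i = ∑ i ∈ s with ¬p i ∧ q i, f i := by
    rw [← filter_filter]
    refine (sum_filter_of_ne fun i hi hf => ?_).symm
    by_contra hqi
    exact hf (hzero i (mem_filter.mp hi).1 (mem_filter.mp hi).2 hqi)
  calc |∑ i ∈ s, f i - c * #{i ∈ s | p i}|
      = |∑ i ∈ s with ¬p i ∧ q i, f i| := by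
        rw [← sum_filter_add_sum_filter_not s p, h_on, h_off, add_sub_cancel_left]
    _ ≤ ∑ i ∈ s with ¬p i ∧ q i, |f i| := abs_sum_le_sum_abs _ _
    _ ≤ ∑ i ∈ s with ¬p i ∧ q i, 1 := sum_le_sum fun i hi => by
        obtain ⟨his, -, hqi⟩ := mem_filter.mp hi
        exact hq i his hqi
    _ = #{i ∈ s | ¬p i ∧ q i} := by rw [sum_const, nsmul_one]
    _ ≤ #{i ∈ s | q i} := by
        exact_mod_cast card_le_card (monotone_filter_right s fun _ _ (h : ¬p _ ∧ q _) => h.2)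

theorem abs_covInt_subsetSum_sub_le {Ω : Type*} [MeasurableSpace Ω] {μ : Measure Ω}
    [IsProbabilityMeasure μ] {n v₁ v₂ : ℕ} {c : ℝ} {X Y : Finset (Fin n) → Ω → ℝ}
    (hXmeas : ∀ A, #A = v₁ → AEStronglyMeasurable (X A) μ)
    (hYmeas : ∀ B, #B = v₂ → AEStronglyMeasurable (Y B) μ)
    (hXrange : ∀ A, #A = v₁ → ∀ ω, X A ω ∈ Set.Icc (0 : ℝ) 1)
    (hYrange : ∀ B, #B = v₂ → ∀ ω, Y B ω ∈ Set.Icc (0 : ℝ) 1)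
    (hindep : ∀ A B, #A = v₁ → #B = v₂ → Disjoint A B → X A ⟂ᵢ[μ] Y B)
    (hcov : ∀ A B, #A = v₁ → #B = v₂ → #(A ∩ B) = 1 → covInt μ (X A) (Y B) = c) :
    |covInt μ (subsetSum v₁ X) (subsetSum v₂ Y) - c * numOnePt v₁ v₂ n|
      ≤ ((min v₁ v₂ - 1) * n ^ (v₁ + v₂ - 2) : ℕ) := by
  have hsum : covInt μ (subsetSum v₁ X) (subsetSum v₂ Y)
      = ∑ p ∈ powersetCard v₁ univ ×ˢ powersetCard v₂ univ, covInt μ (X p.1) (Y p.2) := by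
    unfold _root_.subsetSum
    simp only [univ_filter_card_eq, sum_product]
    refine covInt_fun_sum_fun_sum (fun A hA => ?_) (fun B hB => ?_)
    · have hA := mem_powersetCard_univ.mp hA
      exact memLp_of_mem_Icc (hXmeas A hA) (hXrange A hA) 2
    · have hB := mem_powersetCard_univ.mp hB
      exact memLp_of_mem_Icc (hYmeas B hB) (hYrange B hB) 2
  rw [hsum, numOnePt_eq_card_pairsInter, pairsInter]
  refine (abs_sum_sub_mul_card_filter_le
    (f := fun p : Finset (Fin n) × Finset (Fin n) => covInt μ (X p.1) (Y p.2))
    (fun p => #(p.1 ∩ p.2) = 1) (fun p => 2 ≤ #(p.1 ∩ p.2)) ?_ ?_ ?_).trans ?_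
  · rintro ⟨A, B⟩ hAB h
    simp only [mem_product, mem_powersetCard_univ] at hAB
    exact hcov A B hAB.1 hAB.2 h
  · rintro ⟨A, B⟩ hAB -
    simp only [mem_product, mem_powersetCard_univ] at hAB
    exact abs_covInt_le_one (hXrange A hAB.1) (hYrange B hAB.2)
  · rintro ⟨A, B⟩ hAB h₁ h₂
    simp only [mem_product, mem_powersetCard_univ] at hAB h₁ h₂
    have hdisj : Disjoint A B := disjoint_iff_inter_eq_empty.mpr (card_eq_zero.mp (by omega))
    exact (hindep A B hAB.1 hAB.2 hdisj).covInt_eq_zero (hXmeas A hAB.1) (hYmeas B hAB.2)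
  · have := card_filter_two_le_card_inter_le (α := Fin n) v₁ v₂
    rw [Fintype.card_fin] at this
    exact_mod_cast this

end

/-- If for each `n` the `[0,1]`-valued families `(X_A)_{|A|=v₁}`,
`(Y_B)_{|B|=v₂}` are such that `X_A` and `Y_B` are independent when `A ∩ B = ∅`
and have covariance `c` when `|A ∩ B| = 1`, then the covariance of the sums
differs from `c·N₁(n)` by at most `min(v₁,v₂)·(v₁+v₂-2)!·n^(v₁+v₂-2)`; in
particular `n^{-(v₁+v₂-1)} Cov(Σ X_A, Σ Y_B) → c/((v₁-1)!(v₂-1)!)`. -/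
theorem stmt8 (v₁ v₂ : ℕ) (hv₁ : 1 ≤ v₁) (hv₂ : 1 ≤ v₂) (c : ℝ)
    (Ω : ℕ → Type*) [∀ n, MeasurableSpace (Ω n)] (μ : ∀ n, Measure (Ω n))
    (hprob : ∀ n, IsProbabilityMeasure (μ n))
    (X Y : ∀ n, Finset (Fin n) → Ω n → ℝ)
    (hXmeas : ∀ n A, Measurable (X n A)) (hYmeas : ∀ n B, Measurable (Y n B))
    (hXrange : ∀ n A, A.card = v₁ → ∀ ω, X n A ω ∈ Set.Icc (0 : ℝ) 1)
    (hYrange : ∀ n B, B.card = v₂ → ∀ ω, Y n B ω ∈ Set.Icc (0 : ℝ) 1)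
    (hindep : ∀ n A B, A.card = v₁ → B.card = v₂ → Disjoint A B →
      ProbabilityTheory.IndepFun (X n A) (Y n B) (μ n))
    (hcov : ∀ n A B, A.card = v₁ → B.card = v₂ → (A ∩ B).card = 1 →
      covInt (μ n) (X n A) (Y n B) = c) :
    (∀ n, |covInt (μ n) (subsetSum v₁ (X n)) (subsetSum v₂ (Y n)) - c * numOnePt v₁ v₂ n|
        ≤ (min v₁ v₂ : ℝ) * (v₁ + v₂ - 2).factorial * (n : ℝ) ^ (v₁ + v₂ - 2)) ∧
    Tendsto (fun n : ℕ =>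
        covInt (μ n) (subsetSum v₁ (X n)) (subsetSum v₂ (Y n)) / (n : ℝ) ^ (v₁ + v₂ - 1))
      atTop (nhds (c / ((v₁ - 1).factorial * (v₂ - 1).factorial))) := by
  have hbound : ∀ n, |covInt (μ n) (subsetSum v₁ (X n)) (subsetSum v₂ (Y n))
      - c * numOnePt v₁ v₂ n|
        ≤ (min v₁ v₂ : ℝ) * (v₁ + v₂ - 2).factorial * (n : ℝ) ^ (v₁ + v₂ - 2) := fun n => by
    have := hprob n
    refine (abs_covInt_subsetSum_sub_le (fun A _ => (hXmeas n A).aestronglyMeasurable)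
      (fun B _ => (hYmeas n B).aestronglyMeasurable) (hXrange n) (hYrange n) (hindep n)
      (hcov n)).trans ?_
    have hcoeff : min v₁ v₂ - 1 ≤ min v₁ v₂ * (v₁ + v₂ - 2).factorial :=
      (Nat.sub_le _ _).trans (Nat.le_mul_of_pos_right _ (Nat.factorial_pos _))
    exact_mod_cast Nat.mul_le_mul_right _ hcoeff
  have hexp : v₁ + v₂ - 1 = v₁ + v₂ - 2 + 1 := by omega
  refine ⟨hbound, ?_⟩
  rw [hexp, ← mul_one_div]
  exact tendsto_div_pow_succ_of_abs_sub_le hbound (hexp ▸ tendsto_numOnePt_div_pow hv₁ hv₂)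
end

section
/- Let v ≥ 1, z ≥ 1 and M ≥ 0. There exists a constant K, depending only on z, v and M, with the following property: for every n ∈ ℕ and every family (ξ_A)_{A ∈ 𝒫_v(n)} of random variables on a common probability space that is independent over disjoint index sets and satisfies |ξ_A| ≤ M almost surely and E[ξ_A] = 0 for every A, one has |E[(Σ_{A ∈ 𝒫_v(n)} ξ_A)^z]| ≤ K · n^{zv − ⌈z/2⌉}. In particular, if z is odd, then n^{−z(v−1/2)} E[(Σ_A ξ_A)^z] → 0 as n → ∞. -/
open MeasureTheory Filter ProbabilityTheory

/-- A family of real random variables `ξ a`, where each index `a` carries a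
support set `idx a ⊆ Fin n`, is *independent over disjoint index sets* if
whenever subcollections `𝒜 i` have pairwise disjoint unions of support sets,
the σ-algebras generated by the corresponding subfamilies are mutually
independent. -/
def IndepOverDisjoint {Ω ι : Type*} {n : ℕ} [MeasurableSpace Ω]
    (idx : ι → Finset (Fin n)) (ξ : ι → Ω → ℝ) (μ : Measure Ω) : Prop :=
  ∀ (r : ℕ) (𝒜 : Fin r → Set ι),
    (∀ i j, i ≠ j → Disjoint (⋃ a ∈ 𝒜 i, (idx a : Set (Fin n)))
                             (⋃ a ∈ 𝒜 j, (idx a : Set (Fin n)))) →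
    iIndep (fun i => ⨆ a ∈ 𝒜 i, MeasurableSpace.comap (ξ a) inferInstance) μ

/-!
`E[(∑ ξ_A)^z]` is the sum over `z`-tuples `(A₁, …, A_z)` of `E[ξ_{A₁} ⋯ ξ_{A_z}]`. A term vanishes
as soon as some `Aᵢ` is disjoint from all the others: `ξ_{Aᵢ}` is then centred and independent of
the product of the other factors. In every remaining tuple each `Aᵢ` contains a point lying in
`c ≥ 2` of the sets, and `c ≤ 2(c - 1)` for such points, so double counting gives
`|⋃ Aᵢ| ≤ zv - ⌈z/2⌉ =: m`. A tuple with `|⋃ Aᵢ| ≤ m` is determined by a map `Fin m → Fin n`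
covering the union together with the preimages of the `Aᵢ`, so there are at most `n^m 2^(mz)` of
them, each contributing at most `M^z`. For odd `z`, `m < z(v - 1/2)`.
-/

open Finset Topology

def EachMeetsAnother {κ α : Type*} (F : κ → Finset α) : Prop :=
  ∀ i, ∃ j ≠ i, ¬Disjoint (F i) (F j)

instance {κ α : Type*} [Fintype κ] [DecidableEq κ] [DecidableEq α] (F : κ → Finset α) :
    Decidable (EachMeetsAnother F) := by
  unfold EachMeetsAnother; infer_instance

theorem Finset.card_biUnion_add_le_sum_card {ι α : Type*} [Fintype ι] [DecidableEq α]
    {F : ι → Finset α} (hF : EachMeetsAnother F) :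
    #(univ.biUnion F) + (Fintype.card ι + 1) / 2 ≤ ∑ i, #(F i) := by
  set U := univ.biUnion F
  set c : α → ℕ := fun x => #{i | x ∈ F i}
  set D := U.filter (2 ≤ c ·)
  have hsum_eq : ∀ s : Finset α, ∑ x ∈ s, c x = ∑ i, #(s.filter (· ∈ F i)) := fun s =>
    sum_card_bipartiteAbove_eq_sum_card_bipartiteBelow (fun x i => x ∈ F i)
  have hU : ∑ x ∈ U, c x = ∑ i, #(F i) := by
    rw [hsum_eq]
    refine sum_congr rfl fun i _ => congrArg card (filter_mem_eq_inter.trans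
      (inter_eq_right.2 (subset_biUnion_of_mem F (mem_univ i))))
  have hD : Fintype.card ι ≤ ∑ x ∈ D, c x := by
    rw [hsum_eq, ← card_univ, card_eq_sum_ones]
    refine sum_le_sum fun i _ => card_pos.2 ?_
    obtain ⟨j, hji, hij⟩ := hF i
    obtain ⟨x, hxi, hxj⟩ := not_disjoint_iff.1 hij
    refine ⟨x, mem_filter.2 ⟨mem_filter.2 ⟨mem_biUnion.2 ⟨i, mem_univ i, hxi⟩, ?_⟩, hxi⟩⟩
    exact one_lt_card_iff.2 ⟨i, j, by simpa using hxi, by simpa using hxj, hji.symm⟩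
  have hc_pos : ∀ x ∈ U, 1 ≤ c x := fun x hx => by
    obtain ⟨i, -, hxi⟩ := mem_biUnion.1 hx
    exact card_pos.2 ⟨i, by simpa using hxi⟩
  have hsplit : ∑ x ∈ U, c x = #U + ∑ x ∈ U, (c x - 1) := by
    rw [card_eq_sum_ones, ← sum_add_distrib]
    exact sum_congr rfl fun x hx => by have := hc_pos x hx; omega
  have hD_U : ∑ x ∈ D, (c x - 1) ≤ ∑ x ∈ U, (c x - 1) := sum_le_sum_of_subset (filter_subset _ _)
  have hD_half : ∑ x ∈ D, c x ≤ 2 * ∑ x ∈ D, (c x - 1) := by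
    rw [mul_sum]
    exact sum_le_sum fun x hx => by have := (mem_filter.1 hx).2; omega
  omega

theorem Finset.exists_fin_cover_of_card_le {α : Type*} [DecidableEq α] [Nonempty α]
    {U : Finset α} {m : ℕ} (hU : #U ≤ m) : ∃ e : Fin m → α, U ⊆ univ.image e := by
  inhabit α
  refine ⟨fun k => U.toList.getD k default, fun u hu => ?_⟩
  obtain ⟨k, hk, rfl⟩ := List.mem_iff_getElem.1 (mem_toList.2 hu)
  exact mem_image.2 ⟨⟨k, hk.trans_le (by simpa using hU)⟩, mem_univ _, List.getD_eq_getElem _ _ hk⟩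

theorem Finset.card_filter_card_biUnion_le {ι α : Type*} [Fintype ι] [DecidableEq ι]
    [Fintype α] [DecidableEq α] [Nonempty α] (m : ℕ) :
    #{F : ι → Finset α | #(univ.biUnion F) ≤ m} ≤
      Fintype.card α ^ m * 2 ^ (m * Fintype.card ι) := by
  have hcover : ({F : ι → Finset α | #(univ.biUnion F) ≤ m} : Finset _) ⊆
      (univ : Finset (Fin m → α)).biUnion fun e =>
        Fintype.piFinset fun _ => (univ.image e).powerset := by
    intro F hF
    obtain ⟨e, he⟩ := exists_fin_cover_of_card_le (mem_filter.1 hF).2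
    refine mem_biUnion.2 ⟨e, mem_univ e, Fintype.mem_piFinset.2 fun i => mem_powerset.2 ?_⟩
    exact (subset_biUnion_of_mem F (mem_univ i)).trans he
  calc _ ≤ _ := card_le_card hcover
    _ ≤ ∑ e : Fin m → α, #(Fintype.piFinset fun _ : ι => (univ.image e).powerset) :=
        card_biUnion_le
    _ ≤ ∑ _e : Fin m → α, 2 ^ (m * Fintype.card ι) := sum_le_sum fun e _ => by
        rw [Fintype.card_piFinset, prod_const, card_powerset, card_univ, pow_mul]
        gcongr
        · norm_num
        · exact card_image_le.trans (by simp)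
    _ = Fintype.card α ^ m * 2 ^ (m * Fintype.card ι) := by simp

theorem card_eachMeetsAnother_le {n v z : ℕ} (hz : 1 ≤ z) :
    #{f : Fin z → {A : Finset (Fin n) // #A = v} | EachMeetsAnother fun i => (f i).1} ≤
      n ^ (z * v - (z + 1) / 2) * 2 ^ ((z * v - (z + 1) / 2) * z) := by
  rcases isEmpty_or_nonempty (Fin n) with _ | _
  · rw [card_eq_zero.2 (filter_eq_empty_iff.2 fun f _ hf => ?_)]
    · exact Nat.zero_le _
    obtain ⟨j, -, hj⟩ := hf ⟨0, hz⟩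
    exact hj (by simp [eq_empty_of_isEmpty])
  calc _ ≤ #{F : Fin z → Finset (Fin n) | #(univ.biUnion F) ≤ z * v - (z + 1) / 2} := by
        refine card_le_card_of_injOn (fun f i => (f i).1) (fun f hf => ?_) fun f _ g _ hfg => ?_
        · have hunion := card_biUnion_add_le_sum_card (mem_filter.1 hf).2
          rw [sum_congr rfl fun i _ => (f i).2, Fintype.card_fin] at hunion
          simp only [sum_const, card_univ, Fintype.card_fin, smul_eq_mul] at hunion
          exact mem_filter.2 ⟨mem_univ _, show #(univ.biUnion fun i => (f i).1) ≤ _ by omega⟩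
        · exact funext fun i => Subtype.ext (congrFun hfg i)
    _ ≤ _ := by simpa using card_filter_card_biUnion_le (ι := Fin z) (α := Fin n) _

namespace IndepOverDisjoint

variable {Ω ι : Type*} {n : ℕ} [MeasurableSpace Ω] {idx : ι → Finset (Fin n)} {ξ : ι → Ω → ℝ}
  {μ : Measure Ω}

theorem indep (h : IndepOverDisjoint idx ξ μ) {s t : Set ι}
    (hst : Disjoint (⋃ a ∈ s, (idx a : Set (Fin n))) (⋃ a ∈ t, (idx a : Set (Fin n)))) :
    Indep (⨆ a ∈ s, MeasurableSpace.comap (ξ a) inferInstance)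
      (⨆ a ∈ t, MeasurableSpace.comap (ξ a) inferInstance) μ := by
  refine (h 2 ![s, t] fun i j hij => ?_).indep (i := 0) (j := 1) (by decide)
  fin_cases i <;> fin_cases j
  exacts [absurd rfl hij, hst, hst.symm, absurd rfl hij]

theorem integral_prod_eq_zero {κ : Type*} [Fintype κ] [DecidableEq κ]
    (h : IndepOverDisjoint idx ξ μ) (hmeas : ∀ a, Measurable (ξ a))
    (hmean : ∀ a, ∫ ω, ξ a ω ∂μ = 0) {f : κ → ι} {i₀ : κ}
    (hdisj : ∀ j ≠ i₀, Disjoint (idx (f i₀)) (idx (f j))) :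
    ∫ ω, ∏ i, ξ (f i) ω ∂μ = 0 := by
  set rest : Ω → ℝ := fun ω => ∏ j ∈ univ.erase i₀, ξ (f j) ω
  have hindep := h.indep (s := {f i₀}) (t := f '' {j | j ≠ i₀}) (by
    rw [Set.biUnion_singleton, Set.biUnion_image, Set.disjoint_iUnion₂_right]
    exact fun j hj => disjoint_coe.2 (hdisj j hj))
  have hrest :
      Measurable[⨆ a ∈ f '' {j | j ≠ i₀}, MeasurableSpace.comap (ξ a) inferInstance] rest :=
    Finset.measurable_prod _ fun j hj => (comap_measurable (ξ (f j))).mono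
      (le_iSup₂_of_le (f j) ⟨j, (mem_erase.1 hj).1, rfl⟩ le_rfl) le_rfl
  have hfirst : MeasurableSpace.comap (ξ (f i₀)) inferInstance ≤
      ⨆ a ∈ ({f i₀} : Set ι), MeasurableSpace.comap (ξ a) inferInstance :=
    le_iSup₂_of_le (f i₀) rfl le_rfl
  have hind : IndepFun (ξ (f i₀)) rest μ :=
    (IndepFun_iff_Indep _ _ _).2 <|
      indep_of_indep_of_le_right (indep_of_indep_of_le_left hindep hfirst) hrest.comap_le
  have hprod : (fun ω => ∏ i, ξ (f i) ω) = ξ (f i₀) * rest := funext fun ω =>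
    (mul_prod_erase univ (fun i => ξ (f i) ω) (mem_univ i₀)).symm
  rw [hprod, hind.integral_mul_eq_mul_integral (hmeas _).aestronglyMeasurable
    (Finset.measurable_prod _ fun j _ => hmeas (f j)).aestronglyMeasurable, hmean, zero_mul]

theorem abs_integral_sum_pow_le [Fintype ι] [DecidableEq ι] [IsProbabilityMeasure μ]
    (h : IndepOverDisjoint idx ξ μ) (hmeas : ∀ a, Measurable (ξ a)) {M : ℝ}
    (hbdd : ∀ a, ∀ᵐ ω ∂μ, |ξ a ω| ≤ M) (hmean : ∀ a, ∫ ω, ξ a ω ∂μ = 0) (z : ℕ) :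
    |∫ ω, (∑ a, ξ a ω) ^ z ∂μ| ≤
      #{f : Fin z → ι | EachMeetsAnother fun i => idx (f i)} * M ^ z := by
  have hprod_bdd (f : Fin z → ι) : ∀ᵐ ω ∂μ, ‖∏ i, ξ (f i) ω‖ ≤ M ^ z := by
    filter_upwards [ae_all_iff.2 fun i => hbdd (f i)] with ω hω
    rw [Real.norm_eq_abs, abs_prod]
    exact (prod_le_prod (fun _ _ => abs_nonneg _) fun i _ => hω i).trans_eq (by simp)
  have hprod_int (f : Fin z → ι) : Integrable (fun ω => ∏ i, ξ (f i) ω) μ :=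
    (integrable_const (M ^ z)).mono'
      (Finset.measurable_prod _ fun i _ => hmeas (f i)).aestronglyMeasurable (hprod_bdd f)
  have hsupport (f : Fin z → ι) (hf : ∫ ω, ∏ i, ξ (f i) ω ∂μ ≠ 0) :
      EachMeetsAnother fun i => idx (f i) := by
    by_contra hfree
    obtain ⟨i₀, hi₀⟩ : ∃ i₀, ∀ j ≠ i₀, Disjoint (idx (f i₀)) (idx (f j)) := by
      simpa [EachMeetsAnother] using hfree
    exact hf (h.integral_prod_eq_zero hmeas hmean hi₀)
  calc |∫ ω, (∑ a, ξ a ω) ^ z ∂μ|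
      = |∑ f : Fin z → ι, ∫ ω, ∏ i, ξ (f i) ω ∂μ| := by
        simp_rw [sum_pow', Fintype.piFinset_univ]
        rw [integral_finsetSum _ fun f _ => hprod_int f]
    _ = |∑ f : Fin z → ι with EachMeetsAnother fun i => idx (f i), ∫ ω, ∏ i, ξ (f i) ω ∂μ| := by
        rw [sum_filter_of_ne fun f _ => hsupport f]
    _ ≤ ∑ f : Fin z → ι with EachMeetsAnother fun i => idx (f i), M ^ z :=
        (abs_sum_le_sum_abs _ _).trans <| sum_le_sum fun f _ => by
          simpa using norm_integral_le_of_norm_le_const (hprod_bdd f)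
    _ = _ := by rw [sum_const, nsmul_eq_mul]

end IndepOverDisjoint

theorem tendsto_div_rpow_of_abs_le_mul_pow {a : ℕ → ℝ} {K e : ℝ} {m : ℕ}
    (h : ∀ n, |a n| ≤ K * (n : ℝ) ^ m) (hme : (m : ℝ) < e) :
    Tendsto (fun n => a n / (n : ℝ) ^ e) atTop (𝓝 0) := by
  have hlim : Tendsto (fun n : ℕ => K * (n : ℝ) ^ (-(e - m))) atTop (𝓝 0) := by
    simpa using ((tendsto_rpow_neg_atTop (sub_pos.2 hme)).comp
      tendsto_natCast_atTop_atTop).const_mul K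
  refine squeeze_zero_norm' ?_ hlim
  filter_upwards [eventually_gt_atTop 0] with n hn
  have hn' : (0 : ℝ) < n := Nat.cast_pos.2 hn
  rw [Real.norm_eq_abs, abs_div, abs_of_pos (Real.rpow_pos_of_pos hn' e), neg_sub,
    Real.rpow_sub hn', Real.rpow_natCast, ← mul_div_assoc]
  exact div_le_div_of_nonneg_right (h n) (Real.rpow_nonneg hn'.le e)

theorem cast_sub_half_lt_of_odd {v z : ℕ} (hv : 1 ≤ v) (hz : Odd z) :
    ((z * v - (z + 1) / 2 : ℕ) : ℝ) < z * (v - 1 / 2) := by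
  obtain ⟨k, rfl⟩ := hz
  have hhalf : (2 * k + 1 + 1) / 2 = k + 1 := by omega
  have hle : k + 1 ≤ (2 * k + 1) * v := by nlinarith
  rw [hhalf, Nat.cast_sub hle]
  push_cast
  nlinarith

theorem abs_integral_sum_pow_le_of_card_eq {n v z : ℕ} (hz : 1 ≤ z) {M : ℝ} (hM : 0 ≤ M)
    {Ω : Type*} [MeasurableSpace Ω] {μ : Measure Ω} [IsProbabilityMeasure μ]
    {ξ : {A : Finset (Fin n) // #A = v} → Ω → ℝ} (hmeas : ∀ A, Measurable (ξ A))
    (hbdd : ∀ A, ∀ᵐ ω ∂μ, |ξ A ω| ≤ M) (hmean : ∀ A, ∫ ω, ξ A ω ∂μ = 0)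
    (hind : IndepOverDisjoint (fun A => A.1) ξ μ) :
    |∫ ω, (∑ A, ξ A ω) ^ z ∂μ| ≤
      M ^ z * 2 ^ ((z * v - (z + 1) / 2) * z) * (n : ℝ) ^ (z * v - (z + 1) / 2) := by
  calc _ ≤ _ := hind.abs_integral_sum_pow_le hmeas hbdd hmean z
    _ ≤ ((n ^ (z * v - (z + 1) / 2) * 2 ^ ((z * v - (z + 1) / 2) * z) : ℕ) : ℝ) * M ^ z := by
        gcongr
        exact card_eachMeetsAnother_le hz
    _ = _ := by push_cast; ring

/-- There is a constant `K = K(z, v, M)` such that for any family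
`(ξ_A)_{A ∈ 𝒫_v(n)}` of centered random variables bounded by `M`, independent
over disjoint index sets, one has `|E[(Σ_A ξ_A)^z]| ≤ K · n^(zv - ⌈z/2⌉)`; in
particular, for odd `z` the moments normalized by `n^{z(v-1/2)}` tend to 0. -/
theorem stmt9 (v z : ℕ) (hv : 1 ≤ v) (hz : 1 ≤ z) (M : ℝ) (hM : 0 ≤ M) :
    (∃ K : ℝ, ∀ (n : ℕ) (Ω : Type) (_ : MeasurableSpace Ω) (μ : Measure Ω),
      IsProbabilityMeasure μ →
      ∀ ξ : {A : Finset (Fin n) // A.card = v} → Ω → ℝ,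
        (∀ A, Measurable (ξ A)) →
        (∀ A, ∀ᵐ ω ∂μ, |ξ A ω| ≤ M) →
        (∀ A, ∫ ω, ξ A ω ∂μ = 0) →
        IndepOverDisjoint (fun A => A.1) ξ μ →
        |∫ ω, (∑ A, ξ A ω) ^ z ∂μ| ≤ K * (n : ℝ) ^ (z * v - (z + 1) / 2)) ∧
    (Odd z →
      ∀ (Ω : ℕ → Type) (_ : ∀ n, MeasurableSpace (Ω n)) (μ : ∀ n, Measure (Ω n)),
      (∀ n, IsProbabilityMeasure (μ n)) →
      ∀ ξ : ∀ n : ℕ, {A : Finset (Fin n) // A.card = v} → Ω n → ℝ,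
        (∀ n A, Measurable (ξ n A)) →
        (∀ n A, ∀ᵐ ω ∂μ n, |ξ n A ω| ≤ M) →
        (∀ n A, ∫ ω, ξ n A ω ∂μ n = 0) →
        (∀ n, IndepOverDisjoint (fun A => A.1) (ξ n) (μ n)) →
        Tendsto (fun n : ℕ =>
            (∫ ω, (∑ A, ξ n A ω) ^ z ∂μ n) / (n : ℝ) ^ ((z : ℝ) * ((v : ℝ) - 1 / 2)))
          atTop (nhds 0)) :=
  ⟨⟨_, fun _ _ _ _ _ _ => abs_integral_sum_pow_le_of_card_eq hz hM⟩,
    fun hodd _ _ μ _ _ hmeas hbdd hmean hind => tendsto_div_rpow_of_abs_le_mul_pow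
      (fun n => abs_integral_sum_pow_le_of_card_eq (μ := μ n) hz hM (hmeas n) (hbdd n) (hmean n)
        (hind n))
      (cast_sub_half_lt_of_odd hv hodd)⟩
end

section
/- Let v, w ≥ 1 and C ≥ 0, and set V = v + w − 1. For n ∈ ℕ let (η_A)_{A ∈ 𝒫_v(n)} and (η'_B)_{B ∈ 𝒫_w(n)} be real random variables on a common probability space such that all products η_{A₁}η_{A₂}η'_{B₁}η'_{B₂} are integrable and: (i) E[η_{A₁}η_{A₂}η'_{B₁}η'_{B₂}] = 0 whenever one of the four index sets A₁, A₂, B₁, B₂ is disjoint from the union of the other three; (ii) |E[η_{A₁}η_{A₂}η'_{B₁}η'_{B₂}]| ≤ C for all quadruples. Then E[(n^{−(v−1/2)} Σ_{A ∈ 𝒫_v(n)} η_A)² · (n^{−(w−1/2)} Σ_{B ∈ 𝒫_w(n)} η'_B)²] ≤ C · ((2V)!)³. -/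
/-!
Expanding both squares turns the expectation into a sum of `E[η_{A₁} η_{A₂} η'_{B₁} η'_{B₂}]`
over quadruples. A quadruple in which some set is disjoint from the union of the other three
contributes `0`. In every other quadruple two of the sets meet and a third meets the union of the
rest, so the union has at most `2v + 2w - 2 = 2V` points. Listing that union with `A₁` first,
padded to a word of length `2V` over `Fin n`, and recording where `A₂, B₁, B₂` sit in the word
encodes such a quadruple injectively; hence there are at most `n^{2V} ((2V)!)³` of them, and the
factor `n^{2V}` cancels against the normalization.
-/

open Finset MeasureTheory

lemma Nat.choose_le_factorial (n k : ℕ) : n.choose k ≤ n.factorial := by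
  rcases le_or_gt k n with h | h
  · rw [← choose_mul_factorial_mul_factorial h, mul_assoc]
    exact Nat.le_mul_of_pos_right _ (by positivity)
  · simp [choose_eq_zero_of_lt h]

namespace Finset

variable {α : Type*} [DecidableEq α] {A U X : Finset α}

lemma card_union_add_one_le_of_not_disjoint {s t : Finset α} (h : ¬Disjoint s t) :
    #(s ∪ t) + 1 ≤ #s + #t := by
  rw [← card_union_add_card_inter, add_le_add_iff_left, Nat.one_le_iff_ne_zero, ne_eq,
    card_eq_zero, ← disjoint_iff_inter_eq_empty]
  exact h

lemma card_union₄_add_two_le {s₁ s₂ s₃ s₄ : Finset α} (h₁₂ : ¬Disjoint s₁ s₂)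
    (h₄ : ¬Disjoint s₄ (s₁ ∪ s₂ ∪ s₃)) :
    #(s₁ ∪ s₂ ∪ s₃ ∪ s₄) + 2 ≤ #s₁ + #s₂ + #s₃ + #s₄ := by
  have := card_union_add_one_le_of_not_disjoint h₁₂
  have := card_union_le (s₁ ∪ s₂) s₃
  have := card_union_add_one_le_of_not_disjoint (disjoint_comm.not.mp h₄)
  omega

lemma disjoint_union₄_of_card_lt {s₁ s₂ s₃ s₄ : Finset α}
    (h : #s₁ + #s₂ + #s₃ + #s₄ < #(s₁ ∪ s₂ ∪ s₃ ∪ s₄) + 2) :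
    Disjoint s₁ (s₂ ∪ s₃ ∪ s₄) ∨ Disjoint s₂ (s₁ ∪ s₃ ∪ s₄) ∨ Disjoint s₃ (s₁ ∪ s₂ ∪ s₄) ∨
      Disjoint s₄ (s₁ ∪ s₂ ∪ s₃) := by
  by_contra! hc
  obtain ⟨h₁, h₂, -, h₄⟩ := hc
  refine h.not_ge ?_
  simp only [disjoint_union_right, not_and_or] at h₁
  rcases h₁ with (h₁₂ | h₁₃) | h₁₄
  · exact card_union₄_add_two_le h₁₂ h₄
  · have := card_union₄_add_two_le (s₃ := s₂) h₁₃ (by rwa [union_right_comm s₁ s₃])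
    rw [union_right_comm s₁ s₃] at this
    omega
  · have := card_union₄_add_two_le (s₃ := s₃) h₁₄ (by rwa [union_right_comm s₁ s₄])
    rw [show s₁ ∪ s₄ ∪ s₃ ∪ s₂ = s₁ ∪ s₂ ∪ s₃ ∪ s₄ by ac_rfl] at this
    omega

noncomputable def prefixList (A U : Finset α) : List α := A.toList ++ (U \ A).toList

lemma nodup_prefixList (A U : Finset α) : (prefixList A U).Nodup :=
  (nodup_toList A).append (nodup_toList _) fun _ hA hU =>
    (mem_sdiff.mp (mem_toList.mp hU)).2 (mem_toList.mp hA)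

lemma mem_prefixList (hAU : A ⊆ U) {x : α} : x ∈ prefixList A U ↔ x ∈ U := by
  simp only [prefixList, List.mem_append, mem_toList, mem_sdiff]
  by_cases x ∈ A <;> aesop

lemma length_prefixList (hAU : A ⊆ U) : (prefixList A U).length = #U := by
  simp only [prefixList, List.length_append, length_toList, card_sdiff_of_subset hAU]
  have := card_le_card hAU
  omega

section Enumeration

variable [Inhabited α] (k : ℕ)

noncomputable def prefixEnum (A U : Finset α) (i : Fin k) : α := (prefixList A U).getD i default

noncomputable def positions (A U X : Finset α) : Finset (Fin k) :=
  {i | ↑i < (prefixList A U).length ∧ prefixEnum k A U i ∈ X}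

variable {k}

lemma mem_positions {i : Fin k} :
    i ∈ positions k A U X ↔ ↑i < (prefixList A U).length ∧ prefixEnum k A U i ∈ X := by
  simp [positions]

lemma positions_self (hAU : A ⊆ U) :
    positions k A U A = ({i | ↑i < #A} : Finset (Fin k)) := by
  ext i
  have hA := card_le_card hAU
  rw [mem_positions, mem_filter, length_prefixList hAU]
  simp only [mem_univ, true_and, prefixEnum, prefixList]
  constructor
  · rintro ⟨hi, hmem⟩
    by_contra! hle
    rw [List.getD_append_right _ _ _ _ (by simpa using hle),
      List.getD_eq_getElem _ _ (by simp [card_sdiff_of_subset hAU]; omega)] at hmem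
    exact (mem_sdiff.mp (mem_toList.mp (List.getElem_mem _))).2 hmem
  · intro hi
    rw [List.getD_append _ _ _ _ (by simpa using hi), List.getD_eq_getElem _ _ (by simpa using hi)]
    exact ⟨hi.trans_le hA, mem_toList.mp (List.getElem_mem _)⟩

lemma image_prefixEnum_positions (hAU : A ⊆ U) (hU : #U ≤ k) (hX : X ⊆ U) :
    (positions k A U X).image (prefixEnum k A U) = X := by
  ext x
  simp only [mem_image, mem_positions, prefixEnum]
  constructor
  · rintro ⟨i, ⟨-, hx⟩, rfl⟩
    exact hx
  · intro hx
    obtain ⟨j, hj, rfl⟩ := List.mem_iff_getElem.mp ((mem_prefixList hAU).mpr (hX hx))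
    have hjk : j < k := (length_prefixList hAU ▸ hj).trans_le hU
    refine ⟨⟨j, hjk⟩, ⟨hj, ?_⟩, ?_⟩ <;> rw [List.getD_eq_getElem _ _ hj]
    exact hx

lemma card_positions (hAU : A ⊆ U) (hU : #U ≤ k) (hX : X ⊆ U) :
    #(positions k A U X) = #X := by
  conv_rhs => rw [← image_prefixEnum_positions hAU hU hX]
  refine (card_image_of_injOn fun i hi j hj hij => ?_).symm
  rw [mem_coe, mem_positions] at hi hj
  simp only [prefixEnum, List.getD_eq_getElem _ _ hi.1, List.getD_eq_getElem _ _ hj.1] at hij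
  exact Fin.ext ((nodup_prefixList A U).getElem_inj_iff.mp hij)

end Enumeration

theorem card_filter_card_union₄_le [Fintype α] [Nonempty α] (a b c d k : ℕ) :
    #{p : {s : Finset α // #s = a} × {s : Finset α // #s = b} × {s : Finset α // #s = c} ×
        {s : Finset α // #s = d} | #(p.1.1 ∪ p.2.1.1 ∪ p.2.2.1.1 ∪ p.2.2.2.1) ≤ k} ≤
      Fintype.card α ^ k * (k.choose b * (k.choose c * k.choose d)) := by
  inhabit α
  set U : {s : Finset α // #s = a} × {s : Finset α // #s = b} × {s : Finset α // #s = c} ×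
      {s : Finset α // #s = d} → Finset α := fun p => p.1.1 ∪ p.2.1.1 ∪ p.2.2.1.1 ∪ p.2.2.2.1
  let encode p := (prefixEnum k p.1.1 (U p), positions k p.1.1 (U p) p.2.1,
    positions k p.1.1 (U p) p.2.2.1, positions k p.1.1 (U p) p.2.2.2)
  -- `p.1` is recovered as the first `a` letters of the word, so its positions need not be stored.
  let decode (q : (Fin k → α) × Finset (Fin k) × Finset (Fin k) × Finset (Fin k)) :=
    (({i | ↑i < a} : Finset (Fin k)).image q.1, q.2.1.image q.1, q.2.2.1.image q.1,
      q.2.2.2.image q.1)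
  have hsub₁ p : p.1.1 ⊆ U p := subset_union_left.trans (subset_union_left.trans subset_union_left)
  have hsub₂ p : p.2.1.1 ⊆ U p :=
    subset_union_right.trans (subset_union_left.trans subset_union_left)
  have hsub₃ p : p.2.2.1.1 ⊆ U p := subset_union_right.trans subset_union_left
  have hsub₄ p : p.2.2.2.1 ⊆ U p := subset_union_right
  have decode_encode p (hp : #(U p) ≤ k) :
      decode (encode p) = Prod.map Subtype.val (Prod.map Subtype.val (Prod.map Subtype.val
        Subtype.val)) p := by
    simp only [decode, encode, Prod.map, ← p.1.2, ← positions_self (hsub₁ p),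
      image_prefixEnum_positions (hsub₁ p) hp (hsub₁ p),
      image_prefixEnum_positions (hsub₁ p) hp (hsub₂ p),
      image_prefixEnum_positions (hsub₁ p) hp (hsub₃ p),
      image_prefixEnum_positions (hsub₁ p) hp (hsub₄ p)]
  calc _ ≤ #(univ ×ˢ powersetCard b univ ×ˢ powersetCard c univ ×ˢ powersetCard d univ) := by
        refine card_le_card_of_injOn encode (fun p hp => ?_) fun p hp q hq hpq => ?_
        · have hp : #(U p) ≤ k := (mem_filter.mp hp).2
          simp only [encode, coe_product, coe_univ, Set.mem_prod, Set.mem_univ, mem_coe,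
            mem_powersetCard_univ, true_and, card_positions (hsub₁ p) hp (hsub₂ p),
            card_positions (hsub₁ p) hp (hsub₃ p), card_positions (hsub₁ p) hp (hsub₄ p)]
          exact ⟨p.2.1.2, p.2.2.1.2, p.2.2.2.2⟩
        · have h : decode (encode p) = decode (encode q) := by rw [hpq]
          rw [decode_encode p (mem_filter.mp hp).2, decode_encode q (mem_filter.mp hq).2] at h
          simpa [Prod.ext_iff, Subtype.ext_iff] using h
    _ = _ := by simp [card_product]

theorem sum_le_card_filter_nsmul {ι M : Type*} [Fintype ι] [AddCommMonoid M] [PartialOrder M]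
    [IsOrderedAddMonoid M] {f : ι → M} {C : M} (P : ι → Prop) [DecidablePred P]
    (hzero : ∀ i, ¬P i → f i = 0) (hle : ∀ i, P i → f i ≤ C) :
    ∑ i, f i ≤ #{i | P i} • C := by
  rw [← sum_filter_of_ne fun i _ hi => by_contra (hi ∘ hzero i)]
  exact sum_le_card_nsmul _ _ _ fun i hi => hle i (mem_filter.mp hi).2

theorem sq_sum_mul_sq_sum {ι κ R : Type*} [Fintype ι] [Fintype κ] [CommSemiring R]
    (f : ι → R) (g : κ → R) :
    (∑ a, f a) ^ 2 * (∑ b, g b) ^ 2 =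
      ∑ p : ι × ι × κ × κ, f p.1 * f p.2.1 * g p.2.2.1 * g p.2.2.2 := by
  simp only [Fintype.sum_prod_type, ← mul_sum, ← sum_mul]
  ring

end Finset

theorem MeasureTheory.integral_sq_sum_mul_sq_sum {Ω ι κ : Type*} [MeasurableSpace Ω]
    {μ : Measure Ω} [Fintype ι] [Fintype κ] {f : ι → Ω → ℝ} {g : κ → Ω → ℝ}
    (hint : ∀ a₁ a₂ b₁ b₂, Integrable (fun ω => f a₁ ω * f a₂ ω * g b₁ ω * g b₂ ω) μ) :
    ∫ ω, (∑ a, f a ω) ^ 2 * (∑ b, g b ω) ^ 2 ∂μ =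
      ∑ p : ι × ι × κ × κ, ∫ ω, f p.1 ω * f p.2.1 ω * g p.2.2.1 ω * g p.2.2.2 ω ∂μ := by
  simp_rw [Finset.sq_sum_mul_sq_sum]
  exact integral_finsetSum _ fun p _ => hint _ _ _ _

theorem Real.rpow_neg_sub_half_sq_mul {x : ℝ} (hx : 0 < x) {v w : ℕ} (h : 1 ≤ v + w) :
    (x ^ (-((v : ℝ) - 1 / 2))) ^ 2 * (x ^ (-((w : ℝ) - 1 / 2))) ^ 2 =
      (x ^ (2 * (v + w - 1)))⁻¹ := by
  rw [← rpow_natCast _ 2, ← rpow_natCast _ 2, ← rpow_mul hx.le, ← rpow_mul hx.le,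
    ← rpow_add hx, ← rpow_natCast, ← rpow_neg hx.le]
  congr 1
  push_cast [Nat.cast_sub h]
  ring

theorem stmt14_general (v w : ℕ) (hv : 1 ≤ v) (C : ℝ) (hC : 0 ≤ C)
    (n : ℕ) {Ω : Type*} [MeasurableSpace Ω] (μ : Measure Ω)
    (η : {A : Finset (Fin n) // A.card = v} → Ω → ℝ)
    (η' : {B : Finset (Fin n) // B.card = w} → Ω → ℝ)
    (hint : ∀ A₁ A₂ B₁ B₂,
      Integrable (fun ω => η A₁ ω * η A₂ ω * η' B₁ ω * η' B₂ ω) μ)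
    (hzero : ∀ (A₁ A₂ : {A : Finset (Fin n) // A.card = v})
      (B₁ B₂ : {B : Finset (Fin n) // B.card = w}),
      (Disjoint (A₁ : Finset (Fin n)) ((A₂ : Finset (Fin n)) ∪ B₁ ∪ B₂) ∨
       Disjoint (A₂ : Finset (Fin n)) ((A₁ : Finset (Fin n)) ∪ B₁ ∪ B₂) ∨
       Disjoint (B₁ : Finset (Fin n)) ((A₁ : Finset (Fin n)) ∪ A₂ ∪ B₂) ∨
       Disjoint (B₂ : Finset (Fin n)) ((A₁ : Finset (Fin n)) ∪ A₂ ∪ B₁)) →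
      ∫ ω, η A₁ ω * η A₂ ω * η' B₁ ω * η' B₂ ω ∂μ = 0)
    (hbound : ∀ A₁ A₂ B₁ B₂,
      |∫ ω, η A₁ ω * η A₂ ω * η' B₁ ω * η' B₂ ω ∂μ| ≤ C) :
    ∫ ω, ((n : ℝ) ^ (-((v : ℝ) - 1 / 2)) * ∑ A, η A ω) ^ 2 *
        ((n : ℝ) ^ (-((w : ℝ) - 1 / 2)) * ∑ B, η' B ω) ^ 2 ∂μ
      ≤ C * ((2 * (v + w - 1)).factorial : ℝ) ^ 3 := by
  set k := 2 * (v + w - 1)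
  obtain rfl | hn := n.eq_zero_or_pos
  · have : IsEmpty {A : Finset (Fin 0) // A.card = v} :=
      ⟨fun A => by have := A.2; rw [eq_empty_of_isEmpty A.1, card_empty] at this; omega⟩
    simp only [univ_eq_empty, sum_empty, mul_zero, zero_pow two_ne_zero, zero_mul, integral_zero]
    positivity
  have : Nonempty (Fin n) := Fin.pos_iff_nonempty.mp hn
  let U (p : {A : Finset (Fin n) // A.card = v} × {A : Finset (Fin n) // A.card = v} ×
      {B : Finset (Fin n) // B.card = w} × {B : Finset (Fin n) // B.card = w}) :=
    p.1.1 ∪ p.2.1.1 ∪ p.2.2.1.1 ∪ p.2.2.2.1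
  have vanish p (hp : ¬#(U p) ≤ k) :
      ∫ ω, η p.1 ω * η p.2.1 ω * η' p.2.2.1 ω * η' p.2.2.2 ω ∂μ = 0 := by
    refine hzero _ _ _ _ (disjoint_union₄_of_card_lt ?_)
    simp only [U, p.1.2, p.2.1.2, p.2.2.1.2, p.2.2.2.2] at hp ⊢
    omega
  calc _ = ((n : ℝ) ^ k)⁻¹ *
        ∑ p : _ × _ × _ × _, ∫ ω, η p.1 ω * η p.2.1 ω * η' p.2.2.1 ω * η' p.2.2.2 ω ∂μ := by
        simp_rw [mul_pow, mul_mul_mul_comm]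
        rw [integral_const_mul, Real.rpow_neg_sub_half_sq_mul (by positivity) (by omega),
          integral_sq_sum_mul_sq_sum hint]
    _ ≤ ((n : ℝ) ^ k)⁻¹ * (#{p | #(U p) ≤ k} * C) := by
        rw [← nsmul_eq_mul]
        gcongr
        exact sum_le_card_filter_nsmul _ vanish fun p _ => (le_abs_self _).trans (hbound ..)
    _ ≤ ((n : ℝ) ^ k)⁻¹ * ((n ^ k * k.factorial ^ 3 : ℕ) * C) := by
        gcongr
        refine (card_filter_card_union₄_le v v w w k).trans ?_
        rw [Fintype.card_fin, pow_three]
        gcongr <;> exact Nat.choose_le_factorial k _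
    _ = C * (k.factorial : ℝ) ^ 3 := by
        push_cast
        field_simp

/-- Let `V = v + w - 1`.  If all quadruple products
`η_{A₁} η_{A₂} η'_{B₁} η'_{B₂}` (indices ranging over `𝒫_v(n)` resp. `𝒫_w(n)`)
are integrable, have expectation `0` whenever one of the four index sets is
disjoint from the union of the other three, and expectation bounded by `C` in
absolute value, then
`E[(n^{-(v-1/2)} Σ_A η_A)² (n^{-(w-1/2)} Σ_B η'_B)²] ≤ C ((2V)!)³`. -/
theorem stmt14 (v w : ℕ) (hv : 1 ≤ v) (hw : 1 ≤ w) (C : ℝ) (hC : 0 ≤ C)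
    (n : ℕ) {Ω : Type*} [MeasurableSpace Ω] (μ : Measure Ω)
    [IsProbabilityMeasure μ]
    (η : {A : Finset (Fin n) // A.card = v} → Ω → ℝ)
    (η' : {B : Finset (Fin n) // B.card = w} → Ω → ℝ)
    (hint : ∀ A₁ A₂ B₁ B₂,
      Integrable (fun ω => η A₁ ω * η A₂ ω * η' B₁ ω * η' B₂ ω) μ)
    (hzero : ∀ (A₁ A₂ : {A : Finset (Fin n) // A.card = v})
      (B₁ B₂ : {B : Finset (Fin n) // B.card = w}),
      (Disjoint (A₁ : Finset (Fin n)) ((A₂ : Finset (Fin n)) ∪ B₁ ∪ B₂) ∨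
       Disjoint (A₂ : Finset (Fin n)) ((A₁ : Finset (Fin n)) ∪ B₁ ∪ B₂) ∨
       Disjoint (B₁ : Finset (Fin n)) ((A₁ : Finset (Fin n)) ∪ A₂ ∪ B₂) ∨
       Disjoint (B₂ : Finset (Fin n)) ((A₁ : Finset (Fin n)) ∪ A₂ ∪ B₁)) →
      ∫ ω, η A₁ ω * η A₂ ω * η' B₁ ω * η' B₂ ω ∂μ = 0)
    (hbound : ∀ A₁ A₂ B₁ B₂,
      |∫ ω, η A₁ ω * η A₂ ω * η' B₁ ω * η' B₂ ω ∂μ| ≤ C) :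
    ∫ ω, ((n : ℝ) ^ (-((v : ℝ) - 1 / 2)) * ∑ A, η A ω) ^ 2 *
        ((n : ℝ) ^ (-((w : ℝ) - 1 / 2)) * ∑ B, η' B ω) ^ 2 ∂μ
      ≤ C * ((2 * (v + w - 1)).factorial : ℝ) ^ 3 :=
  stmt14_general v w hv C hC n μ η η' hint hzero hbound
end
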